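/- arXiv:2407.07455 — 7 statements merged into one kernel-verified Lean document; each statement's English description precedes it below -/
import Mathlib

section
/- Let h, w be positive integers and n = h + w. The map sending λ ∈ Y_{h,w} to the binary sequence (a_1,…,a_n) ∈ {0,1}^n with a_p = 1 exactly for p ∈ {λ_{h+1−j} + j : j = 1,…,h} is a bijection from Y_{h,w} onto the set of binary sequences of length n with exactly h entries equal to 1, and it intertwines the map g on Y_{h,w} with the cyclic rotation (a_1,…,a_n) ↦ (a_n, a_1, …, a_{n−1}). -/
/-- A Young diagram in an `h × w` box: an antitone sequence of `h` natural numbers,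
each at most `w`. -/
def Ydiag (h w : ℕ) : Type :=
  {f : Fin h → ℕ // Antitone f ∧ ∀ i, f i ≤ w}

/-- The sequence `(λ_2, …, λ_h, 0)` obtained by deleting the first row. -/
def shiftSeq (h : ℕ) (f : Fin h → ℕ) : Fin h → ℕ :=
  fun i => if hi : (i : ℕ) + 1 < h then f ⟨(i : ℕ) + 1, hi⟩ else 0

lemma shiftSeq_antitone {h : ℕ} {f : Fin h → ℕ} (hf : Antitone f) :
    Antitone (shiftSeq h f) := by
  intro i j hij
  unfold shiftSeq
  by_cases hj : (j : ℕ) + 1 < h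
  · have hi : (i : ℕ) + 1 < h := by
      have := Fin.le_def.mp hij; omega
    rw [dif_pos hj, dif_pos hi]
    exact hf (Fin.mk_le_mk.mpr (Nat.succ_le_succ (Fin.le_def.mp hij)))
  · simp [hj]

/-- The cyclic action `g` on `Y_{h,w}`: add a full column if the width is less than `w`,
otherwise delete the first row. -/
def gY {h w : ℕ} (lam : Ydiag h w) : Ydiag h w :=
  if hw : ∀ i, lam.1 i < w then
    ⟨fun i => lam.1 i + 1,
      fun i j hij => by simpa using lam.2.1 hij,
      fun i => hw i⟩
  else
    ⟨shiftSeq h lam.1, shiftSeq_antitone lam.2.1, by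
      intro i
      unfold shiftSeq
      by_cases hi : (i : ℕ) + 1 < h
      · simpa [hi] using lam.2.2 _
      · simp [hi]⟩

/-- `λ` is upper-triangular: `λ_i ≤ w (h − i) / h` for all `1 ≤ i ≤ h`
(written multiplicatively, with `i` the 1-based index). -/
def UpperTri {h w : ℕ} (lam : Ydiag h w) : Prop :=
  ∀ i : Fin h, h * lam.1 i ≤ w * (h - 1 - (i : ℕ))

/-- The binary sequence of a diagram `λ` (with rows `f`, `0`-indexed), as a function on
`Fin N` (`0`-indexed positions): position `p` (classically `p + 1 ∈ {1, …, n}`) carries a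
`1` exactly when `p + 1 ∈ {λ_{h+1-j} + j : j = 1, …, h}`, i.e. `p = f (rev j) + j` for
some `j : Fin h`. -/
def binSeq (h N : ℕ) (f : Fin h → ℕ) : Fin N → Bool :=
  fun p => decide (∃ j : Fin h, (p : ℕ) = f j.rev + (j : ℕ))

/- ### Auxiliary material -/

lemma strictMono_add_le' {h : ℕ} {g : Fin h → ℕ} (hg : StrictMono g) :
    ∀ (d : ℕ) (a b : Fin h), (b : ℕ) = (a : ℕ) + d → g a + d ≤ g b := by
  intro d
  induction d with
  | zero => intro a b hb; have : a = b := Fin.ext (by omega); rw [this]; omega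
  | succ d ih =>
    intro a b hb
    have hb' : ((a : ℕ) + d) < h := by have := b.2; omega
    have h1 := ih a ⟨(a : ℕ) + d, hb'⟩ rfl
    have h2 : g ⟨(a : ℕ) + d, hb'⟩ < g b := hg (by simp [Fin.lt_def]; omega)
    omega

lemma strictMono_add_le {h : ℕ} {g : Fin h → ℕ} (hg : StrictMono g)
    {a b : Fin h} (hab : (a : ℕ) ≤ (b : ℕ)) : g a + ((b : ℕ) - (a : ℕ)) ≤ g b :=
  strictMono_add_le' hg _ a b (by omega)

/-- The strictly monotone enumeration of the ones of `binSeq`. -/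
def mfun {h w : ℕ} (lam : Ydiag h w) : Fin h → Fin (h + w) :=
  fun j => ⟨lam.1 j.rev + (j : ℕ), by have h1 := lam.2.2 j.rev; have h2 := j.2; omega⟩

lemma mfun_strictMono {h w : ℕ} (lam : Ydiag h w) : StrictMono (mfun lam) := by
  intro a b hab
  have h1 : lam.1 a.rev ≤ lam.1 b.rev := lam.2.1 (Fin.rev_le_rev.mpr hab.le)
  have h2 : (a : ℕ) < (b : ℕ) := hab
  simp only [mfun, Fin.lt_def]
  omega

lemma filter_binSeq_eq {h w : ℕ} (lam : Ydiag h w) :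
    (Finset.univ.filter (fun p : Fin (h + w) => binSeq h (h + w) lam.1 p = true))
      = Finset.image (mfun lam) Finset.univ := by
  ext p
  simp only [Finset.mem_filter, Finset.mem_univ, true_and, Finset.mem_image]
  show decide (∃ j : Fin h, (p : ℕ) = lam.1 j.rev + (j : ℕ)) = true ↔ _
  rw [decide_eq_true_eq]
  constructor
  · rintro ⟨j, hj⟩; exact ⟨j, Fin.ext hj.symm⟩
  · rintro ⟨j, hj⟩; exact ⟨j, (congrArg Fin.val hj).symm⟩

/-- The binary-sequence map is a bijection from `Y_{h,w}` onto the binary sequences of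
length `n = h + w` with exactly `h` ones, and it intertwines `g` with the cyclic
rotation `(a_1, …, a_n) ↦ (a_n, a_1, …, a_{n-1})`. -/
theorem binSeq_bijection_and_equivariant (h w : ℕ) (hh : 0 < h) (hw : 0 < w) :
    (∀ lam : Ydiag h w,
      (Finset.univ.filter (fun p : Fin (h + w) => binSeq h (h + w) lam.1 p = true)).card
        = h) ∧
    Function.Injective (fun lam : Ydiag h w => binSeq h (h + w) lam.1) ∧
    (∀ a : Fin (h + w) → Bool,
      (Finset.univ.filter (fun p : Fin (h + w) => a p = true)).card = h →
        ∃ lam : Ydiag h w, binSeq h (h + w) lam.1 = a) ∧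
    (∀ (lam : Ydiag h w) (p : Fin (h + w)),
      binSeq h (h + w) (gY lam).1 p =
        binSeq h (h + w) lam.1
          ⟨((p : ℕ) + (h + w) - 1) % (h + w), Nat.mod_lt _ (by omega)⟩) := by
  have hcard : ∀ lam : Ydiag h w,
      (Finset.univ.filter (fun p : Fin (h + w) => binSeq h (h + w) lam.1 p = true)).card
        = h := by
    intro lam
    rw [filter_binSeq_eq, Finset.card_image_of_injective _ (mfun_strictMono lam).injective,
      Finset.card_univ, Fintype.card_fin]
  refine ⟨hcard, ?_, ?_, ?_⟩
  · -- injectivity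
    intro lam lam' hll
    dsimp only at hll
    have him : Finset.image (mfun lam) Finset.univ = Finset.image (mfun lam') Finset.univ := by
      rw [← filter_binSeq_eq, ← filter_binSeq_eq, hll]
    have hsc : (Finset.image (mfun lam') Finset.univ).card = h := by
      rw [Finset.card_image_of_injective _ (mfun_strictMono lam').injective,
        Finset.card_univ, Fintype.card_fin]
    have h1 : mfun lam = (Finset.image (mfun lam') Finset.univ).orderEmbOfFin hsc :=
      Finset.orderEmbOfFin_unique hsc
        (fun x => by rw [← him]; exact Finset.mem_image_of_mem _ (Finset.mem_univ x))
        (mfun_strictMono lam)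
    have h2 : mfun lam' = (Finset.image (mfun lam') Finset.univ).orderEmbOfFin hsc :=
      Finset.orderEmbOfFin_unique hsc
        (fun x => Finset.mem_image_of_mem _ (Finset.mem_univ x)) (mfun_strictMono lam')
    have h3 : mfun lam = mfun lam' := h1.trans h2.symm
    have h4 : ∀ i, lam.1 i = lam'.1 i := by
      intro i
      have := congrArg (fun g => ((g i.rev : Fin (h + w)) : ℕ)) h3
      simp only [mfun, Fin.rev_rev] at this
      omega
    exact Subtype.ext (funext h4)
  · -- surjectivity
    intro a ha
    set s : Finset (Fin (h + w)) :=
      Finset.univ.filter (fun p : Fin (h + w) => a p = true) with hs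
    have hsc : s.card = h := ha
    set m := s.orderEmbOfFin hsc with hm
    set g : Fin h → ℕ := fun j => ((m j : Fin (h + w)) : ℕ) with hgdef
    have hg : StrictMono g := fun x y hxy => m.strictMono hxy
    have hgej : ∀ j : Fin h, (j : ℕ) ≤ g j := by
      intro j
      have key := strictMono_add_le hg (a := ⟨0, hh⟩) (b := j) (Nat.zero_le _)
      simp only [Fin.val_mk] at key
      omega
    have hgw : ∀ j : Fin h, g j ≤ h + w - 1 := by
      intro j
      have h2 : g j < h + w := (m j).2
      omega
    set f : Fin h → ℕ := fun i => g i.rev - (i.rev : ℕ) with hfdef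
    have hrev : ∀ j : Fin h, (j.rev : ℕ) = h - 1 - (j : ℕ) := by
      intro j; rw [Fin.val_rev]; omega
    have hanti : Antitone f := by
      intro i i' hii'
      have hii : (i : ℕ) ≤ (i' : ℕ) := hii'
      have hxy : (i'.rev : ℕ) ≤ (i.rev : ℕ) := by rw [hrev, hrev]; omega
      have key := strictMono_add_le hg hxy
      simp only [hfdef]
      omega
    have hbound : ∀ i, f i ≤ w := by
      intro i
      have hile : (i.rev : ℕ) ≤ ((⟨h - 1, by omega⟩ : Fin h) : ℕ) := by
        simp only [hrev]; omega
      have key := strictMono_add_le hg hile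
      have h2 := hgw (⟨h - 1, by omega⟩ : Fin h)
      have h3 : (i.rev : ℕ) ≤ h - 1 := by rw [hrev]; omega
      simp only [hfdef]
      simp only [Fin.val_mk] at key hile
      omega
    refine ⟨⟨f, hanti, hbound⟩, ?_⟩
    funext p
    have hfj : ∀ j : Fin h, f j.rev + (j : ℕ) = g j := by
      intro j
      have := hgej j
      simp only [hfdef, Fin.rev_rev]
      omega
    have key : (∃ j : Fin h, (p : ℕ) = f j.rev + (j : ℕ)) ↔ a p = true := by
      constructor
      · rintro ⟨j, hj⟩
        rw [hfj] at hj
        have hmp : m j = p := Fin.ext hj.symm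
        have := Finset.orderEmbOfFin_mem s hsc j
        rw [hmp, hs, Finset.mem_filter] at this
        exact this.2
      · intro hap
        have hp : p ∈ s := by rw [hs]; exact Finset.mem_filter.mpr ⟨Finset.mem_univ _, hap⟩
        have : p ∈ Set.range m := by rw [Finset.range_orderEmbOfFin]; exact_mod_cast hp
        obtain ⟨j, hj⟩ := this
        exact ⟨j, by rw [hfj]; exact (congrArg Fin.val hj).symm⟩
    show decide (∃ j : Fin h, (p : ℕ) = f j.rev + (j : ℕ)) = a p
    rw [show a p = decide (a p = true) by cases a p <;> simp]
    exact decide_eq_decide.mpr key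
  · -- equivariance
    intro lam p
    have hq : ((p : ℕ) + (h + w) - 1) % (h + w)
        = if (p : ℕ) = 0 then h + w - 1 else (p : ℕ) - 1 := by
      rcases Nat.eq_zero_or_pos (p : ℕ) with h0 | h0
      · rw [if_pos h0, h0, Nat.zero_add]
        exact Nat.mod_eq_of_lt (by omega)
      · rw [if_neg (by omega),
          show (p : ℕ) + (h + w) - 1 = ((p : ℕ) - 1) + (h + w) by omega,
          Nat.add_mod_right, Nat.mod_eq_of_lt (by have := p.2; omega)]
    have hrev : ∀ j : Fin h, (j.rev : ℕ) = h - 1 - (j : ℕ) := by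
      intro j; rw [Fin.val_rev]; omega
    show decide (∃ j : Fin h, (p : ℕ) = (gY lam).1 j.rev + (j : ℕ))
        = decide (∃ j : Fin h, ((p : ℕ) + (h + w) - 1) % (h + w) = lam.1 j.rev + (j : ℕ))
    apply decide_eq_decide.mpr
    rw [hq]
    by_cases hful : ∀ i, lam.1 i < w
    · -- add a column
      have hgy : ∀ i, (gY lam).1 i = lam.1 i + 1 := fun i => by have e : gY lam = _ := dif_pos hful; exact congrArg (fun x : Ydiag h w => x.1 i) e
      simp only [hgy]
      by_cases h0 : (p : ℕ) = 0
      · rw [if_pos h0]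
        constructor
        · rintro ⟨j, hj⟩
          rw [h0] at hj
          omega
        · rintro ⟨j, hj⟩
          have h1 := hful j.rev
          have h2 := j.2
          omega
      · rw [if_neg h0]
        constructor <;> rintro ⟨j, hj⟩ <;> exact ⟨j, by omega⟩
    · -- delete the first row
      have hf0 : lam.1 ⟨0, hh⟩ = w := by
        push_neg at hful
        obtain ⟨i, hi⟩ := hful
        have h1 := lam.2.2 i
        have h2 := lam.2.1 (show (⟨0, hh⟩ : Fin h) ≤ i from Fin.mk_le_mk.mpr (Nat.zero_le _))
        have h3 := lam.2.2 (⟨0, hh⟩ : Fin h)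
        omega
      have hgy : ∀ i, (gY lam).1 i = shiftSeq h lam.1 i := fun i => by have e : gY lam = _ := dif_neg hful; exact congrArg (fun x : Ydiag h w => x.1 i) e
      simp only [hgy]
      by_cases h0 : (p : ℕ) = 0
      · rw [if_pos h0]
        refine iff_of_true ⟨⟨0, hh⟩, ?_⟩ ⟨⟨h - 1, by omega⟩, ?_⟩
        · simp only [shiftSeq]
          rw [dif_neg (by rw [hrev]; show ¬(h - 1 - 0 + 1 < h); omega)]
          show (p : ℕ) = 0 + 0
          omega
        · have heq : (⟨h - 1, by omega⟩ : Fin h).rev = ⟨0, hh⟩ := by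
            apply Fin.ext
            rw [hrev]
            simp
          rw [heq, hf0]
          simp
          omega
      · rw [if_neg h0]
        constructor
        · rintro ⟨j, hj⟩
          simp only [shiftSeq] at hj
          by_cases hcond : (j.rev : ℕ) + 1 < h
          · rw [dif_pos hcond] at hj
            have hj1 : 1 ≤ (j : ℕ) := by
              rw [hrev] at hcond
              have := j.2
              omega
            refine ⟨⟨(j : ℕ) - 1, by omega⟩, ?_⟩
            have heq : (⟨(j : ℕ) - 1, by omega⟩ : Fin h).rev = ⟨(j.rev : ℕ) + 1, hcond⟩ := by
              apply Fin.ext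
              rw [hrev]
              simp only [Fin.val_mk]
              rw [hrev]
              have := j.2
              omega
            rw [heq]
            simp only [Fin.val_mk]
            omega
          · rw [dif_neg hcond] at hj
            exfalso
            rw [hrev] at hcond
            have := j.2
            omega
        · rintro ⟨j, hj⟩
          have hjlt : (j : ℕ) + 1 < h := by
            by_contra hc
            have hje : (j : ℕ) = h - 1 := by have := j.2; omega
            have heq : j.rev = ⟨0, hh⟩ := by
              apply Fin.ext
              rw [hrev]
              simp only [Fin.val_mk]
              omega
            rw [heq, hf0] at hj
            have := p.2
            omega
          refine ⟨⟨(j : ℕ) + 1, hjlt⟩, ?_⟩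
          simp only [shiftSeq]
          have hcond : ((⟨(j : ℕ) + 1, hjlt⟩ : Fin h).rev : ℕ) + 1 < h := by
            rw [hrev]
            simp only [Fin.val_mk]
            omega
          rw [dif_pos hcond]
          have heq : (⟨((⟨(j : ℕ) + 1, hjlt⟩ : Fin h).rev : ℕ) + 1, hcond⟩ : Fin h) = j.rev := by
            apply Fin.ext
            simp only [Fin.val_mk]
            rw [hrev, hrev]
            simp only [Fin.val_mk]
            omega
          rw [heq]
          show (p : ℕ) = lam.1 j.rev + ((j : ℕ) + 1)
          omega
end

section
/- Let h, w be positive integers and n = h + w. Every orbit of the ℤ/nℤ-action generated by g on Y_{h,w} contains at least one upper-triangular diagram. -/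
namespace OrbitUT

variable {h w : ℕ}

def Ysize (lam : Ydiag h w) : ℕ := ∑ i, lam.1 i

def sfun (lam : Ydiag h w) (i : Fin h) : ℕ := lam.1 i + (h - 1 - (i : ℕ))

def Sset (lam : Ydiag h w) : Finset ℕ := Finset.image (sfun lam) Finset.univ

lemma sfun_le (lam : Ydiag h w) (i : Fin h) : sfun lam i ≤ h + w - 1 := by
  have h1 := lam.2.2 i
  have h2 := i.isLt
  unfold sfun
  omega

lemma sfun_anti (lam : Ydiag h w) {i j : Fin h} (hij : i ≤ j) :
    sfun lam j ≤ sfun lam i := by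
  have h1 : lam.1 j ≤ lam.1 i := lam.2.1 hij
  have h2 := j.isLt
  have h3 : (i : ℕ) ≤ (j : ℕ) := hij
  unfold sfun
  omega

lemma sfun_strictAnti (lam : Ydiag h w) {i j : Fin h} (hij : i < j) :
    sfun lam j < sfun lam i := by
  have h1 : lam.1 j ≤ lam.1 i := lam.2.1 (le_of_lt hij)
  have h2 := j.isLt
  have h3 : (i : ℕ) < (j : ℕ) := hij
  unfold sfun
  omega

lemma mem_Sset (lam : Ydiag h w) (i : Fin h) : sfun lam i ∈ Sset lam :=
  Finset.mem_image_of_mem _ (Finset.mem_univ i)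

lemma width_iff (hh : 0 < h) (lam : Ydiag h w) :
    (h + w - 1) ∈ Sset lam ↔ ¬ (∀ i, lam.1 i < w) := by
  constructor
  · intro hm hall
    obtain ⟨i, -, hi⟩ := Finset.mem_image.mp hm
    have h1 := hall i
    have h2 := i.isLt
    unfold sfun at hi
    omega
  · intro hnot
    push_neg at hnot
    obtain ⟨i, hi⟩ := hnot
    have h1 := lam.2.2 i
    have h2 : lam.1 ⟨0, hh⟩ ≤ w := lam.2.2 _
    have h3 : lam.1 i ≤ lam.1 ⟨0, hh⟩ := lam.2.1 (by simp [Fin.le_def])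
    have h4 : sfun lam ⟨0, hh⟩ = h + w - 1 := by
      have h5 : ((⟨0, hh⟩ : Fin h) : ℕ) = 0 := rfl
      unfold sfun
      rw [h5]
      omega
    exact h4 ▸ mem_Sset lam ⟨0, hh⟩

lemma gY_pos (lam : Ydiag h w) (hc : ∀ i, lam.1 i < w) :
    (gY lam).1 = fun i => lam.1 i + 1 := by
  rw [gY]
  exact congrArg Subtype.val (dif_pos hc)

lemma gY_neg (lam : Ydiag h w) (hc : ¬ ∀ i, lam.1 i < w) :
    (gY lam).1 = shiftSeq h lam.1 := by
  rw [gY]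
  exact congrArg Subtype.val (dif_neg hc)

lemma sum_shiftSeq (hh : 0 < h) (f : Fin h → ℕ) :
    (∑ i, shiftSeq h f i) + f ⟨0, hh⟩ = ∑ i, f i := by
  set F : ℕ → ℕ := fun k => if hk : k < h then f ⟨k, hk⟩ else 0 with hF
  have e1 : ∑ i, f i = ∑ k ∈ Finset.range h, F k := by
    rw [Finset.sum_range]
    apply Finset.sum_congr rfl
    intro i _
    simp [hF, i.isLt]
  have e2 : ∑ i, shiftSeq h f i = ∑ k ∈ Finset.range h, F (k + 1) := by
    rw [Finset.sum_range]
    apply Finset.sum_congr rfl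
    intro i _
    by_cases hi : (i : ℕ) + 1 < h
    · simp only [shiftSeq, hF, dif_pos hi]
    · simp only [shiftSeq, hF, dif_neg hi]
  have e3 : F 0 = f ⟨0, hh⟩ := by simp [hF, hh]
  have e4 : F h = 0 := by simp [hF]
  have e5 : ∑ k ∈ Finset.range (h + 1), F k
      = (∑ k ∈ Finset.range h, F (k + 1)) + F 0 := Finset.sum_range_succ' F h
  have e6 : ∑ k ∈ Finset.range (h + 1), F k
      = (∑ k ∈ Finset.range h, F k) + F h := Finset.sum_range_succ F h
  omega

lemma size_gY_pos (lam : Ydiag h w) (hc : ∀ i, lam.1 i < w) :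
    Ysize (gY lam) = Ysize lam + h := by
  unfold Ysize
  rw [gY_pos lam hc]
  simp [Finset.sum_add_distrib]

lemma size_gY_neg (hh : 0 < h) (lam : Ydiag h w) (hc : ¬ ∀ i, lam.1 i < w) :
    Ysize (gY lam) + w = Ysize lam := by
  have h0 : lam.1 ⟨0, hh⟩ = w := by
    push_neg at hc
    obtain ⟨i, hi⟩ := hc
    have h1 := lam.2.2 i
    have h2 : lam.1 ⟨0, hh⟩ ≤ w := lam.2.2 _
    have h3 : lam.1 i ≤ lam.1 ⟨0, hh⟩ := lam.2.1 (by simp [Fin.le_def])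
    omega
  have hsum := sum_shiftSeq hh lam.1
  rw [h0] at hsum
  unfold Ysize
  rw [gY_neg lam hc]
  exact hsum

lemma width_top (hh : 0 < h) (lam : Ydiag h w) (hc : ¬ ∀ i, lam.1 i < w) :
    lam.1 ⟨0, hh⟩ = w := by
  push_neg at hc
  obtain ⟨i, hi⟩ := hc
  have h1 := lam.2.2 i
  have h2 : lam.1 ⟨0, hh⟩ ≤ w := lam.2.2 _
  have h3 : lam.1 i ≤ lam.1 ⟨0, hh⟩ := lam.2.1 (by simp [Fin.le_def])
  omega

lemma sfun_gY_del_pos (lam : Ydiag h w) (hc : ¬ ∀ i, lam.1 i < w) {j : Fin h}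
    (hj : (j : ℕ) + 1 < h) :
    sfun (gY lam) j = sfun lam ⟨(j : ℕ) + 1, hj⟩ + 1 := by
  unfold sfun
  rw [gY_neg lam hc]
  unfold shiftSeq
  rw [dif_pos hj]
  have hval : ((⟨(j : ℕ) + 1, hj⟩ : Fin h) : ℕ) = (j : ℕ) + 1 := rfl
  omega

lemma sfun_gY_del_neg (lam : Ydiag h w) (hc : ¬ ∀ i, lam.1 i < w) {j : Fin h}
    (hj : ¬ ((j : ℕ) + 1 < h)) :
    sfun (gY lam) j = 0 := by
  unfold sfun
  rw [gY_neg lam hc]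
  unfold shiftSeq
  rw [dif_neg hj]
  have := j.isLt
  omega

lemma Sset_gY (hh : 0 < h) (hw : 0 < w) (lam : Ydiag h w) :
    Sset (gY lam) = (Sset lam).image (fun x => (x + 1) % (h + w)) := by
  unfold Sset
  rw [Finset.image_image]
  by_cases hc : ∀ i, lam.1 i < w
  · apply Finset.image_congr
    intro i _
    have h1 := hc i
    have h2 := i.isLt
    simp only [Function.comp_apply, sfun, gY_pos lam hc]
    rw [Nat.mod_eq_of_lt (by omega)]
    omega
  · have h0 : lam.1 ⟨0, hh⟩ = w := width_top hh lam hc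
    ext a
    simp only [Finset.mem_image, Finset.mem_univ, true_and, Function.comp_apply]
    constructor
    · rintro ⟨j, rfl⟩
      by_cases hj : (j : ℕ) + 1 < h
      · refine ⟨⟨(j : ℕ) + 1, hj⟩, ?_⟩
        rw [sfun_gY_del_pos lam hc hj]
        have hb : lam.1 ⟨(j : ℕ) + 1, hj⟩ ≤ w := lam.2.2 _
        have hsf : sfun lam ⟨(j : ℕ) + 1, hj⟩
            = lam.1 ⟨(j : ℕ) + 1, hj⟩ + (h - 1 - ((j : ℕ) + 1)) := rfl
        exact Nat.mod_eq_of_lt (by omega)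
      · refine ⟨⟨0, hh⟩, ?_⟩
        rw [sfun_gY_del_neg lam hc hj]
        have hsf : sfun lam ⟨0, hh⟩ = lam.1 ⟨0, hh⟩ + (h - 1 - 0) := rfl
        rw [hsf, h0]
        have he : w + (h - 1 - 0) + 1 = h + w := by omega
        rw [he, Nat.mod_self]
    · rintro ⟨i, rfl⟩
      by_cases hi0 : (i : ℕ) = 0
      · have hpf : h - 1 < h := by omega
        refine ⟨⟨h - 1, hpf⟩, ?_⟩
        have hjw : ¬ (((⟨h - 1, hpf⟩ : Fin h) : ℕ) + 1 < h) := by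
          show ¬ (h - 1 + 1 < h); omega
        rw [sfun_gY_del_neg lam hc hjw]
        have hieq : i = ⟨0, hh⟩ := Fin.ext hi0
        rw [hieq]
        have hsf : sfun lam ⟨0, hh⟩ = lam.1 ⟨0, hh⟩ + (h - 1 - 0) := rfl
        rw [hsf, h0]
        have he : w + (h - 1 - 0) + 1 = h + w := by omega
        rw [he, Nat.mod_self]
      · have hi2 := i.isLt
        have hpf : (i : ℕ) - 1 < h := by omega
        refine ⟨⟨(i : ℕ) - 1, hpf⟩, ?_⟩
        have hjw : ((⟨(i : ℕ) - 1, hpf⟩ : Fin h) : ℕ) + 1 < h := by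
          show (i : ℕ) - 1 + 1 < h; omega
        rw [sfun_gY_del_pos lam hc hjw]
        have hfin : (⟨((⟨(i : ℕ) - 1, hpf⟩ : Fin h) : ℕ) + 1, hjw⟩ : Fin h) = i :=
          Fin.ext (show (i : ℕ) - 1 + 1 = (i : ℕ) by omega)
        rw [hfin]
        have hb := lam.2.2 i
        have hsf : sfun lam i = lam.1 i + (h - 1 - (i : ℕ)) := rfl
        rw [Nat.mod_eq_of_lt (by omega)]

lemma Sset_iterate (hh : 0 < h) (hw : 0 < w) (lam : Ydiag h w) (m : ℕ) :
    Sset (gY^[m] lam) = (Sset lam).image (fun x => (x + m) % (h + w)) := by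
  induction m with
  | zero =>
    simp only [Function.iterate_zero, id_eq, Nat.add_zero]
    rw [Finset.image_congr (g := id), Finset.image_id]
    intro x hx
    simp only [Finset.mem_coe] at hx
    obtain ⟨i, -, rfl⟩ := Finset.mem_image.mp hx
    have hb := sfun_le lam i
    simp only [id_eq]
    exact Nat.mod_eq_of_lt (by omega)
  | succ m ih =>
    rw [Function.iterate_succ_apply', Sset_gY hh hw, ih, Finset.image_image]
    apply Finset.image_congr
    intro x _
    simp only [Function.comp_apply]
    rw [Nat.mod_add_mod]
    ring_nf

def delCount (lam : Ydiag h w) (m : ℕ) : ℕ :=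
  ((Finset.range m).filter (fun k => (h + w - 1) ∈ Sset (gY^[k] lam))).card

lemma size_iterate (hh : 0 < h) (hw : 0 < w) (lam : Ydiag h w) (m : ℕ) :
    Ysize lam + h * m = Ysize (gY^[m] lam) + (h + w) * delCount lam m := by
  induction m with
  | zero => simp [delCount]
  | succ m ih =>
    have hrange : m ∉ Finset.range m := by simp
    rw [Function.iterate_succ_apply']
    unfold delCount at *
    rw [Finset.range_add_one, Finset.filter_insert]
    by_cases hdel : (h + w - 1) ∈ Sset (gY^[m] lam)
    · rw [if_pos hdel, Finset.card_insert_of_notMem (by simp), Nat.mul_succ,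
        Nat.mul_succ]
      have hc := (width_iff hh _).mp hdel
      have := size_gY_neg hh (gY^[m] lam) hc
      omega
    · rw [if_neg hdel, Nat.mul_succ]
      have hc : ∀ i, (gY^[m] lam).1 i < w := by
        by_contra hcon
        exact hdel ((width_iff hh _).mpr hcon)
      have := size_gY_pos (gY^[m] lam) hc
      omega

end OrbitUT

/-- Every orbit of the `ℤ/nℤ`-action generated by `g` on `Y_{h,w}` (`n = h + w`)
contains at least one upper-triangular diagram. -/
theorem orbit_contains_upper_triangular (h w : ℕ) (hh : 0 < h) (hw : 0 < w)
    (lam : Ydiag h w) : ∃ m : ℕ, UpperTri (gY^[m] lam) := by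
  classical
  open OrbitUT in
  have hP : ∃ k, ∃ m, Ysize (gY^[m] lam) = k := ⟨_, 0, rfl⟩
  obtain ⟨m₀, hm₀⟩ := Nat.find_spec hP
  set μ := gY^[m₀] lam with hμ
  have hmin : ∀ j, Ysize μ ≤ Ysize (gY^[j] μ) := by
    intro j
    rw [hm₀]
    apply Nat.find_min' hP
    exact ⟨j + m₀, by rw [Function.iterate_add_apply]⟩
  refine ⟨m₀, ?_⟩
  intro i
  by_contra hviol
  push_neg at hviol
  rw [← hμ] at hviol
  have hsle : sfun μ i ≤ h + w - 1 := sfun_le μ i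
  have hilt := i.isLt
  have hμi := μ.2.2 i
  have hs_def : sfun μ i = μ.1 i + (h - 1 - (i : ℕ)) := rfl
  set s := sfun μ i with hs
  set m := (h + w) - s with hm
  -- delCount μ m ≥ i + 1
  have hD : (i : ℕ) + 1 ≤ delCount μ m := by
    have hcard : (Finset.range ((i : ℕ) + 1)).card = (i : ℕ) + 1 := by simp
    rw [← hcard]
    unfold delCount
    apply Finset.card_le_card_of_injOn
        (fun j => (h + w - 1) - sfun μ ⟨j % h, Nat.mod_lt j hh⟩)
    · intro j hj
      rw [Finset.mem_coe, Finset.mem_range] at hj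
      have hjh : j % h = j := Nat.mod_eq_of_lt (by omega)
      have hjle : (⟨j % h, Nat.mod_lt j hh⟩ : Fin h) ≤ i := by
        rw [Fin.le_def]
        simpa [hjh] using Nat.lt_succ_iff.mp hj
      have hsj_ge : s ≤ sfun μ ⟨j % h, Nat.mod_lt j hh⟩ := sfun_anti μ hjle
      have hsj_le : sfun μ ⟨j % h, Nat.mod_lt j hh⟩ ≤ h + w - 1 := sfun_le μ _
      rw [Finset.mem_coe, Finset.mem_filter, Finset.mem_range]
      dsimp only
      refine ⟨by omega, ?_⟩
      rw [Sset_iterate hh hw]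
      apply Finset.mem_image.mpr
      refine ⟨sfun μ ⟨j % h, Nat.mod_lt j hh⟩, mem_Sset μ _, ?_⟩
      have he : sfun μ ⟨j % h, Nat.mod_lt j hh⟩
          + ((h + w - 1) - sfun μ ⟨j % h, Nat.mod_lt j hh⟩) = h + w - 1 := by omega
      rw [he]
      exact Nat.mod_eq_of_lt (by omega)
    · intro j1 hj1 j2 hj2 hfeq
      simp only [Finset.coe_range, Set.mem_Iio] at hj1 hj2
      have hj1h : j1 % h = j1 := Nat.mod_eq_of_lt (by omega)
      have hj2h : j2 % h = j2 := Nat.mod_eq_of_lt (by omega)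
      by_contra hne
      have hs1 : sfun μ ⟨j1 % h, Nat.mod_lt j1 hh⟩ ≤ h + w - 1 := sfun_le μ _
      have hs2 : sfun μ ⟨j2 % h, Nat.mod_lt j2 hh⟩ ≤ h + w - 1 := sfun_le μ _
      simp only at hfeq
      rcases Nat.lt_or_ge j1 j2 with hlt | hge
      · have := sfun_strictAnti μ (i := ⟨j1 % h, Nat.mod_lt j1 hh⟩)
          (j := ⟨j2 % h, Nat.mod_lt j2 hh⟩) (by rw [Fin.lt_def]; simpa [hj1h, hj2h])
        omega
      · have hlt2 : j2 < j1 := by omega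
        have := sfun_strictAnti μ (i := ⟨j2 % h, Nat.mod_lt j2 hh⟩)
          (j := ⟨j1 % h, Nat.mod_lt j1 hh⟩) (by rw [Fin.lt_def]; simpa [hj1h, hj2h])
        omega
  -- size identity and minimality
  have hsz := size_iterate hh hw μ m
  have hge := hmin m
  have hHM : (h + w) * delCount μ m ≤ h * m := by omega
  have hD2 : (h + w) * ((i : ℕ) + 1) ≤ (h + w) * delCount μ m :=
    Nat.mul_le_mul_left (h + w) hD
  -- arithmetic contradiction
  have e1 : h * m + h * s = h * (h + w) := by
    rw [← Nat.mul_add]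
    congr 1
    omega
  have e2 : h * s = h * μ.1 i + h * (h - 1 - (i : ℕ)) := by
    rw [hs_def, Nat.mul_add]
  have e3 : (h + w) * ((i : ℕ) + 1) + (h + w) * (h - 1 - (i : ℕ)) = (h + w) * h := by
    rw [← Nat.mul_add]
    congr 1
    omega
  have e4 : (h + w) * (h - 1 - (i : ℕ))
      = h * (h - 1 - (i : ℕ)) + w * (h - 1 - (i : ℕ)) := Nat.add_mul h w _
  have e5 : h * (h + w) = (h + w) * h := Nat.mul_comm h (h + w)
  omega
end

section
/- Let h, w be positive integers, n = h + w, and let λ ∈ Y_{h,w} be an upper-triangular diagram. Let i_0 be the smallest index i with 1 ≤ i ≤ h for which λ_i = w(h−i)/h (such an index exists since λ_h = 0). Then o^u(λ) := i_0 + w − λ_{i_0} equals the smallest positive integer m such that g^m·λ is again upper-triangular. -/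
/-- State formula: after `m` steps with `k` shifts, entry `i` equals
`λ_{i+k} + (m-k)` if `i+k < h`, and `λ_{i+k-h} + (m-k) - w` otherwise. -/
def stF (h w : ℕ) (f : Fin h → ℕ) (k m : ℕ) : Fin h → ℕ :=
  fun i => if (i : ℕ) + k < h then f ⟨((i : ℕ) + k) % h, Nat.mod_lt _ i.pos⟩ + (m - k)
    else f ⟨((i : ℕ) + k) % h, Nat.mod_lt _ i.pos⟩ + (m - k) - w


lemma fin_app_congr {h : ℕ} (f : Fin h → ℕ) {a b : ℕ} (pa : a < h) (pb : b < h)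
    (hab : a = b) : f ⟨a, pa⟩ = f ⟨b, pb⟩ := by
  cases hab; rfl

lemma gY_add {h w : ℕ} (x : Ydiag h w) (hlt : ∀ i, x.1 i < w) :
    (gY x).1 = fun i => x.1 i + 1 := by
  rw [gY]; exact congrArg Subtype.val (dif_pos hlt)

lemma gY_shift {h w : ℕ} (x : Ydiag h w) (hnlt : ¬ ∀ i, x.1 i < w) :
    (gY x).1 = shiftSeq h x.1 := by
  rw [gY]; exact congrArg Subtype.val (dif_neg hnlt)

lemma gY_invariant (h w : ℕ) (lam : Ydiag h w) (i0 : Fin h) :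
    ∀ m : ℕ, m + lam.1 i0 ≤ (i0 : ℕ) + 1 + w →
    ∃ k, k ≤ (i0 : ℕ) + 1 ∧ k ≤ m ∧
      (∀ hk : k - 1 < h, 0 < k → k + w ≤ m + lam.1 ⟨k - 1, hk⟩) ∧
      (∀ hk2 : k ≤ (i0 : ℕ), m + lam.1 ⟨k, lt_of_le_of_lt hk2 i0.2⟩ ≤ k + w) ∧
      (k = (i0 : ℕ) + 1 → m + lam.1 i0 = k + w) ∧
      (gY^[m] lam).1 = stF h w lam.1 k m := by
  have hh : 0 < h := i0.pos
  intro m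
  induction m with
  | zero =>
    intro _
    refine ⟨0, by omega, le_refl 0, by omega, ?_, by omega, ?_⟩
    · intro _; simpa using lam.2.2 ⟨0, lt_of_le_of_lt (Nat.zero_le _) i0.2⟩
    · funext i
      simp [stF, Nat.mod_eq_of_lt i.2]
  | succ m ih =>
    intro hm1
    obtain ⟨k, hk1, hkm, ht, hnext, hend, hst⟩ := ih (by omega)
    -- k ≤ i0
    have hki0 : k ≤ (i0 : ℕ) := by
      rcases Nat.lt_or_ge k ((i0 : ℕ) + 1) with h' | h'
      · omega
      · have := hend (by omega); omega
    have hkh : k < h := lt_of_le_of_lt hki0 i0.2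
    have hmono := lam.2.1
    -- the top entry of the current state
    have htop : (gY^[m] lam).1 ⟨0, hh⟩ = lam.1 ⟨k, hkh⟩ + (m - k) := by
      rw [hst]
      simp [stF, Nat.mod_eq_of_lt hkh, hkh]
    have hnk := hnext hki0
    rw [Function.iterate_succ_apply']
    rcases Nat.lt_or_ge (m + lam.1 ⟨k, hkh⟩) (k + w) with hcase | hcase
    · -- add a column
      have hlt : ∀ i, (gY^[m] lam).1 i < w := by
        intro i
        have h1 : (gY^[m] lam).1 i ≤ (gY^[m] lam).1 ⟨0, hh⟩ :=
          (gY^[m] lam).2.1 (by simp [Fin.le_def])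
        rw [htop] at h1; omega
      refine ⟨k, hk1, by omega, ?_, ?_, by omega, ?_⟩
      · intro hkpf hkpos
        have := ht hkpf hkpos; omega
      · intro hk2; omega
      · rw [gY_add _ hlt]
        rw [hst]
        funext i
        simp only [stF]
        by_cases hih : (i : ℕ) + k < h
        · simp only [if_pos hih]; omega
        · simp only [if_neg hih]
          -- tail entry: need f_{(i+k)%h} + (m-k) ≥ w
          have hk0 : 0 < k := by
            have : (i : ℕ) < h := i.2
            omega
          have hk1h : k - 1 < h := by omega
          have hmod : ((i : ℕ) + k) % h = (i : ℕ) + k - h := by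
            have hih2 : (i : ℕ) + k = h + ((i : ℕ) + k - h) := by omega
            conv_lhs => rw [hih2]
            rw [Nat.add_mod_left]
            exact Nat.mod_eq_of_lt (show (i : ℕ) + k - h < h by have := i.2; omega)
          have hle : lam.1 ⟨k - 1, hk1h⟩ ≤ lam.1 ⟨((i : ℕ) + k) % h, Nat.mod_lt _ i.pos⟩ :=
            hmono (a := ⟨((i : ℕ) + k) % h, Nat.mod_lt _ i.pos⟩) (b := ⟨k - 1, hk1h⟩)
              (by rw [Fin.mk_le_mk, hmod]; have := i.2; omega)
          have hA := ht hk1h hk0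
          omega
    · -- shift: top entry equals w
      have hcase' : m + lam.1 ⟨k, hkh⟩ = k + w := le_antisymm hnk hcase
      have hnlt : ¬ ∀ i, (gY^[m] lam).1 i < w := by
        intro hall
        have := hall ⟨0, hh⟩
        rw [htop] at this; omega
      refine ⟨k + 1, ?_, by omega, ?_, ?_, ?_, ?_⟩
      · -- k+1 ≤ i0+1
        omega
      · intro hkpf _
        simp only [Nat.add_sub_cancel]
        omega
      · intro hk2
        have : lam.1 ⟨k + 1, lt_of_le_of_lt hk2 i0.2⟩ ≤ lam.1 ⟨k, hkh⟩ :=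
          hmono (by simp [Fin.le_def])
        omega
      · intro hkeq
        have : (⟨k, hkh⟩ : Fin h) = i0 := by
          apply Fin.ext; simp; omega
        rw [this] at hcase'
        omega
      · rw [gY_shift _ hnlt]
        rw [hst]
        funext i
        simp only [shiftSeq, stF]
        by_cases hih : (i : ℕ) + 1 < h
        · rw [dif_pos hih]
          simp only [show (i : ℕ) + 1 + k = (i : ℕ) + (k + 1) from by omega]
          by_cases hih2 : (i : ℕ) + (k + 1) < h
          · simp only [if_pos hih2]
            omega
          · simp only [if_neg hih2]
            omega
        · rw [dif_neg hih]
          rw [if_neg (show ¬ ((i : ℕ) + (k + 1) < h) by omega)]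
          have hmod : ((i : ℕ) + (k + 1)) % h = k := by
            have h1 : (i : ℕ) + (k + 1) = h + k := by have := i.2; omega
            rw [h1, Nat.add_mod_left, Nat.mod_eq_of_lt hkh]
          rw [fin_app_congr lam.1 (Nat.mod_lt _ i.pos) hkh hmod]
          omega

/-- For an upper-triangular diagram `λ`, if `i₀` is the smallest (here `0`-indexed)
index at which the diagonal inequality `λ_i ≤ w(h−i)/h` is an equality, then
`o^u(λ) = i₀ + w − λ_{i₀}` (with `i₀` counted `1`-based) is the smallest positive
integer `m` such that `g^m·λ` is again upper-triangular. -/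
theorem ou_is_least_return_time (h w : ℕ) (hh : 0 < h) (hw : 0 < w)
    (lam : Ydiag h w) (hut : UpperTri lam) (i0 : Fin h)
    (heq : h * lam.1 i0 = w * (h - 1 - (i0 : ℕ)))
    (hmin : ∀ j : Fin h, j < i0 → h * lam.1 j ≠ w * (h - 1 - (j : ℕ))) :
    IsLeast {m : ℕ | 0 < m ∧ UpperTri (gY^[m] lam)} (((i0 : ℕ) + 1) + w - lam.1 i0) := by
  have hmono := lam.2.1
  have hi0h : (i0 : ℕ) < h := i0.2
  have hi0w : lam.1 i0 < w := by
    by_contra hc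
    push_neg at hc
    have h1 : h * w ≤ h * lam.1 i0 := Nat.mul_le_mul_left h hc
    rw [heq] at h1
    have e3 : (i0 : ℕ) ≤ h - 1 := by omega
    have e2 : (1 : ℕ) ≤ h := hh
    zify [e3, e2] at h1
    have h4 : (0 : ℤ) ≤ (w : ℤ) * ((i0 : ℕ) : ℤ) := by positivity
    have h5 : (0 : ℤ) < (w : ℤ) := by exact_mod_cast hw
    linarith
  constructor
  · refine ⟨by omega, ?_⟩
    obtain ⟨k, hk1, hkm, ht, hnext, hend, hst⟩ :=
      gY_invariant h w lam i0 ((i0 : ℕ) + 1 + w - lam.1 i0) (by omega)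
    have hkeq : k = (i0 : ℕ) + 1 := by
      by_contra hne
      have hk2 : k ≤ (i0 : ℕ) := by omega
      have h5 := hnext hk2
      have h6 : lam.1 i0 ≤ lam.1 ⟨k, lt_of_le_of_lt hk2 i0.2⟩ := by
        apply hmono
        rw [Fin.le_def]
        exact hk2
      omega
    subst hkeq
    intro i
    rw [hst]
    simp only [stF]
    by_cases hih : (i : ℕ) + ((i0 : ℕ) + 1) < h
    · rw [if_pos hih]
      have hmod : ((i : ℕ) + ((i0 : ℕ) + 1)) % h = (i : ℕ) + ((i0 : ℕ) + 1) :=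
        Nat.mod_eq_of_lt hih
      rw [fin_app_congr lam.1 (Nat.mod_lt _ i.pos) hih hmod]
      have hut2 := hut ⟨(i : ℕ) + ((i0 : ℕ) + 1), hih⟩
      simp only at hut2
      have hMk : (i0 : ℕ) + 1 + w - lam.1 i0 - ((i0 : ℕ) + 1) = w - lam.1 i0 := by omega
      rw [hMk]
      have e1 : (i : ℕ) + ((i0 : ℕ) + 1) ≤ h - 1 := by omega
      have e3 : (i : ℕ) ≤ h - 1 := by omega
      have e4 : (i0 : ℕ) ≤ h - 1 := by omega
      have e5 : lam.1 i0 ≤ w := le_of_lt hi0w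
      have e2 : (1 : ℕ) ≤ h := hh
      zify [e1, e3, e4, e5, e2] at hut2 heq ⊢
      linarith
    · rw [if_neg hih]
      have hih' : (i : ℕ) < h := i.2
      have hjh : (i : ℕ) + ((i0 : ℕ) + 1) - h < h := by omega
      have hmod : ((i : ℕ) + ((i0 : ℕ) + 1)) % h = (i : ℕ) + ((i0 : ℕ) + 1) - h := by
        have hsp : (i : ℕ) + ((i0 : ℕ) + 1) = h + ((i : ℕ) + ((i0 : ℕ) + 1) - h) := by omega
        conv_lhs => rw [hsp]
        rw [Nat.add_mod_left]
        exact Nat.mod_eq_of_lt hjh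
      rw [fin_app_congr lam.1 (Nat.mod_lt _ i.pos) hjh hmod]
      have hut2 := hut ⟨(i : ℕ) + ((i0 : ℕ) + 1) - h, hjh⟩
      simp only at hut2
      have hMk : (i0 : ℕ) + 1 + w - lam.1 i0 - ((i0 : ℕ) + 1) = w - lam.1 i0 := by omega
      rw [hMk]
      -- the index is ≤ i0, so the value is ≥ lam i0
      have hjle : (i : ℕ) + ((i0 : ℕ) + 1) - h ≤ (i0 : ℕ) := by omega
      have hge : lam.1 i0 ≤ lam.1 ⟨(i : ℕ) + ((i0 : ℕ) + 1) - h, hjh⟩ := by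
        apply hmono
        rw [Fin.le_def]
        exact hjle
      have e1 : (i : ℕ) + ((i0 : ℕ) + 1) - h ≤ h - 1 := by omega
      have e3 : (i : ℕ) ≤ h - 1 := by omega
      have e4 : (i0 : ℕ) ≤ h - 1 := by omega
      have e5 : lam.1 i0 ≤ w := le_of_lt hi0w
      have e2 : (1 : ℕ) ≤ h := hh
      have e6 : w ≤ lam.1 ⟨(i : ℕ) + ((i0 : ℕ) + 1) - h, hjh⟩ + (w - lam.1 i0) := by omega
      have e7 : h ≤ (i : ℕ) + ((i0 : ℕ) + 1) := by omega
      zify [e1, e3, e4, e5, e2, e6, e7] at hut2 heq ⊢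
      linarith
  · rintro m ⟨hm0, hmUT⟩
    by_contra hlt
    push_neg at hlt
    obtain ⟨k, hk1, hkm, ht, hnext, hend, hst⟩ := gY_invariant h w lam i0 m (by omega)
    have hki0 : k ≤ (i0 : ℕ) := by
      by_contra hne
      have hke : k = (i0 : ℕ) + 1 := by omega
      have := hend hke
      omega
    have hidx : (i0 : ℕ) - k + k < h := by omega
    have hu := hmUT ⟨(i0 : ℕ) - k, by omega⟩
    rw [hst] at hu
    simp only [stF] at hu
    rw [if_pos (show ((⟨(i0 : ℕ) - k, by omega⟩ : Fin h) : ℕ) + k < h from hidx)] at hu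
    have hmod : ((i0 : ℕ) - k + k) % h = (i0 : ℕ) := by
      have hsp : (i0 : ℕ) - k + k = (i0 : ℕ) := by omega
      rw [hsp]
      exact Nat.mod_eq_of_lt i0.2
    rw [fin_app_congr lam.1 (Nat.mod_lt _ hh) i0.2 hmod] at hu
    rw [show (⟨(i0 : ℕ), i0.2⟩ : Fin h) = i0 from Fin.eta i0 i0.2] at hu
    -- hu : h * (lam.1 i0 + (m - k)) ≤ w * (h - 1 - ((i0:ℕ) - k))
    rcases Nat.eq_zero_or_pos k with hk0 | hk0
    · subst hk0
      simp only [Nat.sub_zero] at hu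
      have hexp : h * (lam.1 i0 + m) = h * lam.1 i0 + h * m := by ring
      have hpos : 0 < h * m := Nat.mul_pos hh hm0
      linarith
    · have hk1h : k - 1 < h := by omega
      have hltfin : (⟨k - 1, hk1h⟩ : Fin h) < i0 := by
        rw [Fin.lt_def]
        simp only
        omega
      have hstrict : h * lam.1 ⟨k - 1, hk1h⟩ < w * (h - 1 - (k - 1)) :=
        lt_of_le_of_ne (hut ⟨k - 1, hk1h⟩) (hmin ⟨k - 1, hk1h⟩ hltfin)
      have htk := ht hk1h hk0
      have hmul : h * (k + w) ≤ h * (m + lam.1 ⟨k - 1, hk1h⟩) := Nat.mul_le_mul_left h htk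
      have e1 : (i0 : ℕ) - k ≤ h - 1 := by omega
      have e2 : (1 : ℕ) ≤ h := hh
      have e3 : (i0 : ℕ) ≤ h - 1 := by omega
      have e4 : k - 1 ≤ h - 1 := by omega
      have e5 : k ≤ m := hkm
      have e6 : (1 : ℕ) ≤ k := hk0
      have e7 : k ≤ (i0 : ℕ) := hki0
      zify [e1, e2, e3, e4, e5, e6, e7] at hu heq hstrict hmul ⊢
      linarith
end

section
/- Let h, w be positive integers with gcd(h, w) = 1 and n = h + w. Then for every upper-triangular diagram λ ∈ Y_{h,w}, the smallest positive integer m such that g^m·λ is upper-triangular equals n; in particular every orbit of the ℤ/nℤ-action on Y_{h,w} has length n. -/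
namespace CRTaux
open Finset Function

variable {h w : ℕ}

def cval (lam : Ydiag h w) (i : Fin h) : ℕ := lam.1 i + (h - 1 - (i : ℕ))

lemma cval_strictAnti (lam : Ydiag h w) : StrictAnti (cval lam) := by
  intro i j hij
  have h1 : lam.1 j ≤ lam.1 i := lam.2.1 (le_of_lt hij)
  have h2 : (j : ℕ) < h := j.2
  have h3 : (i : ℕ) < (j : ℕ) := hij
  unfold cval; omega

lemma cval_lt (lam : Ydiag h w) (i : Fin h) : cval lam i < h + w := by
  have h1 : lam.1 i ≤ w := lam.2.2 i
  have h2 : (i : ℕ) < h := i.2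
  unfold cval; omega

def Sset (lam : Ydiag h w) : Finset ℕ := Finset.image (cval lam) Finset.univ

lemma mem_Sset_lt {lam : Ydiag h w} {x : ℕ} (hx : x ∈ Sset lam) : x < h + w := by
  obtain ⟨i, -, rfl⟩ := Finset.mem_image.mp hx
  exact cval_lt lam i

lemma card_Sset (lam : Ydiag h w) : (Sset lam).card = h := by
  rw [Sset, Finset.card_image_of_injective _ (cval_strictAnti lam).injective]
  simp

lemma Sset_inj {lam mu : Ydiag h w} (hS : Sset lam = Sset mu) : lam = mu := by
  have hcard : (Sset lam).card = h := card_Sset lam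
  have hmono : ∀ (nu : Ydiag h w), StrictMono (fun i : Fin h => cval nu i.rev) := by
    intro nu i j hij
    exact cval_strictAnti nu (Fin.rev_lt_rev.mpr hij)
  have hf : (fun i : Fin h => cval lam i.rev) = (Sset lam).orderEmbOfFin hcard :=
    Finset.orderEmbOfFin_unique hcard
      (fun i => Finset.mem_image_of_mem _ (Finset.mem_univ _)) (hmono lam)
  have hg : (fun i : Fin h => cval mu i.rev) = (Sset lam).orderEmbOfFin hcard :=
    Finset.orderEmbOfFin_unique hcard
      (fun i => by rw [hS]; exact Finset.mem_image_of_mem _ (Finset.mem_univ _)) (hmono mu)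
  have hc : ∀ i : Fin h, cval lam i = cval mu i := by
    intro i
    have := congrFun (hf.trans hg.symm) i.rev
    simpa [Fin.rev_rev] using this
  have hval : lam.1 = mu.1 := by
    funext i
    have := hc i
    unfold cval at this
    omega
  exact Subtype.ext hval

end CRTaux

namespace CRTaux
open Finset Function
variable {h w : ℕ}

lemma Sset_gY (hh : 0 < h) (lam : Ydiag h w) :
    Sset (gY lam) = (Sset lam).image (fun x => (x + 1) % (h + w)) := by
  rw [Sset, Sset, Finset.image_image]
  by_cases hlt : ∀ i, lam.1 i < w
  · apply Finset.image_congr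
    intro i _
    have h1 : lam.1 i < w := hlt i
    have h2 : (i : ℕ) < h := i.2
    show cval (gY lam) i = (cval lam i + 1) % (h + w)
    have hv : (gY lam).1 i = lam.1 i + 1 := by
      rw [gY]; exact congrArg (fun x : Ydiag h w => x.1 i) (dif_pos hlt)
    unfold cval
    rw [hv, Nat.mod_eq_of_lt (by omega)]
    omega
  · -- delete case
    have h0 : lam.1 ⟨0, hh⟩ = w := by
      push_neg at hlt
      obtain ⟨i, hi⟩ := hlt
      have h1 : lam.1 i ≤ lam.1 ⟨0, hh⟩ := lam.2.1 (by exact Fin.mk_le_of_le_val (Nat.zero_le _))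
      have h2 := lam.2.2 ⟨0, hh⟩
      omega
    have hv : (gY lam).1 = shiftSeq h lam.1 := by
      rw [gY]; exact congrArg (fun x : Ydiag h w => x.1) (dif_neg hlt)
    set π : Fin h → Fin h := fun i => ⟨((i : ℕ) + 1) % h, Nat.mod_lt _ hh⟩ with hπ
    have hsurj : Function.Surjective π := by
      intro j
      by_cases hj : (j : ℕ) = 0
      · refine ⟨⟨h - 1, by omega⟩, ?_⟩
        apply Fin.ext
        show (h - 1 + 1) % h = (j : ℕ)
        rw [show h - 1 + 1 = h by omega, Nat.mod_self, hj]
      · refine ⟨⟨(j : ℕ) - 1, by have := j.2; omega⟩, ?_⟩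
        apply Fin.ext
        show ((j : ℕ) - 1 + 1) % h = (j : ℕ)
        rw [show (j : ℕ) - 1 + 1 = (j : ℕ) by omega, Nat.mod_eq_of_lt j.2]
    have hpt : ∀ i : Fin h, cval (gY lam) i = ((fun x => (x + 1) % (h + w)) ∘ cval lam ∘ π) i := by
      intro i
      have h2 : (i : ℕ) < h := i.2
      show cval (gY lam) i = (cval lam (π i) + 1) % (h + w)
      unfold cval
      rw [hv]
      unfold shiftSeq
      by_cases hi : (i : ℕ) + 1 < h
      · rw [dif_pos hi]
        have hπi : π i = ⟨(i : ℕ) + 1, hi⟩ := by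
          apply Fin.ext
          show ((i : ℕ) + 1) % h = (i : ℕ) + 1
          exact Nat.mod_eq_of_lt hi
        rw [hπi]
        have hb : lam.1 ⟨(i : ℕ) + 1, hi⟩ ≤ w := lam.2.2 _
        have hval : ((⟨(i : ℕ) + 1, hi⟩ : Fin h) : ℕ) = (i : ℕ) + 1 := rfl
        rw [hval, Nat.mod_eq_of_lt (by omega)]
        omega
      · rw [dif_neg hi]
        have hπi : π i = ⟨0, hh⟩ := by
          apply Fin.ext
          show ((i : ℕ) + 1) % h = 0
          rw [show (i : ℕ) + 1 = h by omega, Nat.mod_self]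
        rw [hπi, h0]
        rw [show w + (h - 1 - (0 : ℕ)) + 1 = h + w by omega, Nat.mod_self]
        omega
    have step1 : Finset.image (cval (gY lam)) Finset.univ
        = Finset.image (((fun x => (x + 1) % (h + w)) ∘ cval lam) ∘ π) Finset.univ := by
      apply Finset.image_congr; intro i _; exact hpt i
    rw [step1, ← Finset.image_image, Finset.image_univ_of_surjective hsurj]

lemma Sset_iter (hh : 0 < h) (lam : Ydiag h w) (m : ℕ) :
    Sset (gY^[m] lam) = (Sset lam).image (fun x => (x + m) % (h + w)) := by
  induction m with
  | zero =>
      simp only [Function.iterate_zero_apply]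
      nth_rewrite 1 [← Finset.image_id (s := Sset lam)]
      apply Finset.image_congr
      intro x hx
      simp [Nat.mod_eq_of_lt (mem_Sset_lt hx)]
  | succ m ih =>
      rw [Function.iterate_succ_apply', Sset_gY hh, ih, Finset.image_image]
      apply Finset.image_congr
      intro x _
      show ((x + m) % (h + w) + 1) % (h + w) = (x + (m + 1)) % (h + w)
      rw [Nat.mod_add_mod, Nat.add_assoc]

lemma gY_iter_n (hh : 0 < h) (lam : Ydiag h w) : gY^[h + w] lam = lam := by
  apply Sset_inj
  rw [Sset_iter hh lam (h + w)]
  nth_rewrite 2 [← Finset.image_id (s := Sset lam)]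
  apply Finset.image_congr
  intro x hx
  show (x + (h + w)) % (h + w) = x
  rw [Nat.add_mod_right, Nat.mod_eq_of_lt (mem_Sset_lt hx)]

lemma period_dvd (hh : 0 < h) (hcop : Nat.gcd h w = 1) (lam : Ydiag h w) (p : ℕ)
    (hp : gY^[p] lam = lam) : (h + w) ∣ p := by
  have hS : (Sset lam).image (fun x => (x + p) % (h + w)) = Sset lam := by
    rw [← Sset_iter hh lam p, hp]
  have hinj : ∀ x ∈ Sset lam, ∀ y ∈ Sset lam,
      (x + p) % (h + w) = (y + p) % (h + w) → x = y := by
    intro x hx y hy hxy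
    have hx' := mem_Sset_lt hx
    have hy' := mem_Sset_lt hy
    have h1 : x ≡ y [MOD h + w] := Nat.ModEq.add_right_cancel' p hxy
    have h2 : x % (h + w) = y % (h + w) := h1
    rwa [Nat.mod_eq_of_lt hx', Nat.mod_eq_of_lt hy'] at h2
  haveI : NeZero (h + w) := ⟨by omega⟩
  have hsum : (∑ x ∈ Sset lam, (x : ZMod (h + w)))
      = ∑ x ∈ Sset lam, (((x + p) % (h + w) : ℕ) : ZMod (h + w)) := by
    conv_lhs => rw [← hS]
    rw [Finset.sum_image hinj]
  have hsum2 : (∑ x ∈ Sset lam, (((x + p) % (h + w) : ℕ) : ZMod (h + w)))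
      = (∑ x ∈ Sset lam, (x : ZMod (h + w))) + (h : ZMod (h + w)) * p := by
    have : ∀ x ∈ Sset lam, (((x + p) % (h + w) : ℕ) : ZMod (h + w))
        = (x : ZMod (h + w)) + (p : ZMod (h + w)) := by
      intro x _
      rw [ZMod.natCast_mod, Nat.cast_add]
    rw [Finset.sum_congr rfl this, Finset.sum_add_distrib, Finset.sum_const, card_Sset,
      nsmul_eq_mul]
  have hz : ((h * p : ℕ) : ZMod (h + w)) = 0 := by
    push_cast
    exact left_eq_add.mp (hsum.trans hsum2)
  have hdvd : (h + w) ∣ h * p := (ZMod.natCast_eq_zero_iff _ _).mp hz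
  have hcop' : Nat.Coprime (h + w) h := by
    rw [Nat.add_comm]
    exact Nat.coprime_add_self_left.mpr (Nat.Coprime.symm hcop)
  exact hcop'.dvd_of_dvd_mul_left hdvd

end CRTaux

namespace CRTaux
open Finset Function
variable {h w : ℕ}

/-- Step function of the lattice path attached to `lam`, extended `n`-periodically. -/
def stS (lam : Ydiag h w) (t : ℕ) : ℤ :=
  (h : ℤ) - (h + w) * (if t % (h + w) ∈ Sset lam then 1 else 0)

/-- Height function of the lattice path. -/
def Gfun (lam : Ydiag h w) (j : ℕ) : ℤ := ∑ t ∈ Finset.range j, stS lam t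

lemma stS_congr (lam : Ydiag h w) {a b : ℕ} (hab : a % (h + w) = b % (h + w)) :
    stS lam a = stS lam b := by
  rw [stS, stS, hab]

lemma Gfun_succ (lam : Ydiag h w) (j : ℕ) :
    Gfun lam (j + 1) = Gfun lam j + stS lam j := Finset.sum_range_succ _ _

lemma Gfun_eq (lam : Ydiag h w) (j : ℕ) (hj : j ≤ h + w) :
    Gfun lam j = (h : ℤ) * j - (h + w) * ((Sset lam).filter (fun x => x < j)).card := by
  have hmod : ∀ t ∈ Finset.range j, stS lam t
      = (h : ℤ) - (h + w) * (if t ∈ Sset lam then 1 else 0) := by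
    intro t ht
    rw [stS, Nat.mod_eq_of_lt (lt_of_lt_of_le (Finset.mem_range.mp ht) hj)]
  rw [Gfun, Finset.sum_congr rfl hmod, Finset.sum_sub_distrib, Finset.sum_const,
    Finset.card_range, ← Finset.mul_sum, Finset.sum_boole]
  have hfil : (Finset.range j).filter (fun t => t ∈ Sset lam)
      = (Sset lam).filter (fun x => x < j) := by
    ext x
    simp only [Finset.mem_filter, Finset.mem_range]
    tauto
  rw [hfil, nsmul_eq_mul, mul_comm]

lemma Gfun_n (lam : Ydiag h w) : Gfun lam (h + w) = 0 := by
  rw [Gfun_eq lam _ le_rfl]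
  have : (Sset lam).filter (fun x => x < h + w) = Sset lam :=
    Finset.filter_true_of_mem (fun x hx => mem_Sset_lt hx)
  rw [this, card_Sset]
  push_cast
  ring

lemma Gfun_period (lam : Ydiag h w) (j : ℕ) :
    Gfun lam (j + (h + w)) = Gfun lam j := by
  induction j with
  | zero =>
      have h0 : Gfun lam 0 = 0 := rfl
      rw [Nat.zero_add, Gfun_n, h0]
  | succ j ih =>
      have e : j + 1 + (h + w) = (j + (h + w)) + 1 := by omega
      rw [e, Gfun_succ, ih, Gfun_succ lam j]
      congr 1
      exact stS_congr lam (by rw [Nat.add_mod_right])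

lemma count_below (lam : Ydiag h w) (i : Fin h) :
    ((Sset lam).filter (fun x => x < cval lam i)).card = h - 1 - (i : ℕ) := by
  have hset : (Sset lam).filter (fun x => x < cval lam i)
      = Finset.image (cval lam) (Finset.Ioi i) := by
    ext x
    simp only [Finset.mem_filter, Sset, Finset.mem_image, Finset.mem_univ, true_and,
      Finset.mem_Ioi]
    constructor
    · rintro ⟨⟨j, rfl⟩, hlt⟩
      exact ⟨j, (cval_strictAnti lam).lt_iff_gt.mp hlt, rfl⟩
    · rintro ⟨j, hij, rfl⟩
      exact ⟨⟨j, rfl⟩, cval_strictAnti lam hij⟩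
  rw [hset, Finset.card_image_of_injective _ (cval_strictAnti lam).injective, Fin.card_Ioi]

lemma UT_iff (lam : Ydiag h w) :
    UpperTri lam ↔ ∀ j < h + w, Gfun lam j ≤ 0 := by
  constructor
  · intro hU
    have hs : ∀ x ∈ Sset lam, Gfun lam x ≤ 0 := by
      intro x hx
      obtain ⟨i, -, rfl⟩ := Finset.mem_image.mp hx
      rw [Gfun_eq lam _ (le_of_lt (cval_lt lam i)), count_below]
      have h1 := hU i
      have h2 : (i : ℕ) < h := i.2
      have hN : h * cval lam i ≤ (h + w) * (h - 1 - (i : ℕ)) := by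
        have e1 : h * cval lam i = h * lam.1 i + h * (h - 1 - (i : ℕ)) := by
          rw [cval, Nat.mul_add]
        have e2 : (h + w) * (h - 1 - (i : ℕ))
            = w * (h - 1 - (i : ℕ)) + h * (h - 1 - (i : ℕ)) := by ring
        rw [e1, e2]
        exact Nat.add_le_add_right h1 _
      have hN' : (h : ℤ) * cval lam i ≤ ((h : ℤ) + w) * ((h - 1 - (i : ℕ) : ℕ) : ℤ) := by
        exact_mod_cast hN
      linarith
    intro j hj
    have main : ∀ d j, j + d = h + w → Gfun lam j ≤ 0 := by
      intro d
      induction d with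
      | zero =>
          intro j hj
          have : j = h + w := by omega
          rw [this, Gfun_n]
      | succ d ih =>
          intro j hj
          by_cases hjS : j ∈ Sset lam
          · exact hs j hjS
          · have h1 := ih (j + 1) (by omega)
            have h2 := Gfun_succ lam j
            have h3 : stS lam j = (h : ℤ) := by
              rw [stS, Nat.mod_eq_of_lt (by omega : j < h + w), if_neg hjS]
              ring
            have hh' : (0 : ℤ) ≤ (h : ℤ) := by positivity
            rw [h3] at h2
            linarith
    exact main (h + w - j) j (by omega)
  · intro hG i
    have h2 : (i : ℕ) < h := i.2
    have hG1 := hG (cval lam i) (cval_lt lam i)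
    rw [Gfun_eq lam _ (le_of_lt (cval_lt lam i)), count_below] at hG1
    have hN : h * cval lam i ≤ (h + w) * (h - 1 - (i : ℕ)) := by
      have : (h : ℤ) * cval lam i ≤ ((h : ℤ) + w) * ((h - 1 - (i : ℕ) : ℕ) : ℤ) := by
        linarith
      exact_mod_cast this
    have e1 : h * cval lam i = h * lam.1 i + h * (h - 1 - (i : ℕ)) := by
      rw [cval, Nat.mul_add]
    have e2 : (h + w) * (h - 1 - (i : ℕ))
        = w * (h - 1 - (i : ℕ)) + h * (h - 1 - (i : ℕ)) := by ring
    rw [e1, e2] at hN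
    exact Nat.le_of_add_le_add_right hN

end CRTaux

namespace CRTaux
open Finset Function
variable {h w : ℕ}

lemma stS_gY (hh : 0 < h) (lam : Ydiag h w) (t : ℕ) :
    stS (gY lam) t = stS lam (t + (h + w - 1)) := by
  have hiff : (t % (h + w) ∈ Sset (gY lam)) ↔ ((t + (h + w - 1)) % (h + w) ∈ Sset lam) := by
    rw [Sset_gY hh]
    constructor
    · intro hm
      obtain ⟨s, hs, hseq⟩ := Finset.mem_image.mp hm
      have hs' : s < h + w := mem_Sset_lt hs
      have : (t + (h + w - 1)) % (h + w) = s := by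
        calc (t + (h + w - 1)) % (h + w)
            = (t % (h + w) + (h + w - 1)) % (h + w) := (Nat.mod_add_mod _ _ _).symm
          _ = ((s + 1) % (h + w) + (h + w - 1)) % (h + w) := by rw [hseq]
          _ = (s + 1 + (h + w - 1)) % (h + w) := Nat.mod_add_mod _ _ _
          _ = (s + (h + w)) % (h + w) := by congr 1; omega
          _ = s % (h + w) := Nat.add_mod_right _ _
          _ = s := Nat.mod_eq_of_lt hs'
      rwa [this]
    · intro hm
      refine Finset.mem_image.mpr ⟨(t + (h + w - 1)) % (h + w), hm, ?_⟩
      calc ((t + (h + w - 1)) % (h + w) + 1) % (h + w)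
          = (t + (h + w - 1) + 1) % (h + w) := Nat.mod_add_mod _ _ _
        _ = (t + (h + w)) % (h + w) := by congr 1; omega
        _ = t % (h + w) := Nat.add_mod_right _ _
  rw [stS, stS]
  by_cases hm : t % (h + w) ∈ Sset (gY lam)
  · rw [if_pos hm, if_pos (hiff.mp hm)]
  · rw [if_neg hm, if_neg (fun hc => hm (hiff.mpr hc))]

lemma stS_iter (hh : 0 < h) (lam : Ydiag h w) (m t : ℕ) :
    stS (gY^[m] lam) t = stS lam (t + m * (h + w - 1)) := by
  induction m generalizing t with
  | zero => simp
  | succ m ih =>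
      rw [Function.iterate_succ_apply', stS_gY hh, ih]
      congr 1
      ring

lemma Gfun_shift (hh : 0 < h) (lam : Ydiag h w) {m : ℕ} (hm0 : 0 < m) (hmn : m < h + w)
    (j : ℕ) :
    Gfun (gY^[m] lam) j = Gfun lam ((h + w - m) + j) - Gfun lam (h + w - m) := by
  set r := h + w - m with hr
  have hmod : (m * (h + w - 1)) % (h + w) = r % (h + w) := by
    have e1 : m * (h + w - 1) + m = m * (h + w) := by
      rw [← Nat.mul_succ]
      congr 1
      omega
    have t1 : (m * (h + w - 1) + m) % (h + w) = (r + m) % (h + w) := by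
      rw [e1, show r + m = h + w by omega, Nat.mul_mod_left, Nat.mod_self]
    exact Nat.ModEq.add_right_cancel' m t1
  have hst : ∀ t, stS (gY^[m] lam) t = stS lam (r + t) := by
    intro t
    rw [stS_iter hh]
    apply stS_congr
    calc (t + m * (h + w - 1)) % (h + w)
        = (t % (h + w) + m * (h + w - 1) % (h + w)) % (h + w) := Nat.add_mod _ _ _
      _ = (t % (h + w) + r % (h + w)) % (h + w) := by rw [hmod]
      _ = (t + r) % (h + w) := (Nat.add_mod _ _ _).symm
      _ = (r + t) % (h + w) := by rw [Nat.add_comm]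
  have hsum : Gfun (gY^[m] lam) j = ∑ t ∈ Finset.range j, stS lam (r + t) := by
    rw [Gfun]
    exact Finset.sum_congr rfl (fun t _ => hst t)
  have hsplit : Gfun lam (r + j) = Gfun lam r + ∑ t ∈ Finset.range j, stS lam (r + t) := by
    rw [Gfun, Gfun, Finset.sum_range_add]
  rw [hsum, hsplit]
  ring

lemma unique_UT (hh : 0 < h) (hcop : Nat.gcd h w = 1) (lam : Ydiag h w)
    (hU : UpperTri lam) {m : ℕ} (hm0 : 0 < m) (hmn : m < h + w) :
    ¬ UpperTri (gY^[m] lam) := by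
  intro hU'
  set r := h + w - m with hr
  have hG := (UT_iff lam).mp hU
  have hG' := (UT_iff _).mp hU'
  have hGr_le : Gfun lam r ≤ 0 := hG r (by omega)
  have h1 := hG' m hmn
  rw [Gfun_shift hh lam hm0 hmn m] at h1
  have e : r + m = 0 + (h + w) := by omega
  rw [← hr, e, Gfun_period] at h1
  have h0 : Gfun lam 0 = 0 := rfl
  rw [h0] at h1
  have hGr0 : Gfun lam r = 0 := le_antisymm hGr_le (by linarith)
  rw [Gfun_eq lam r (by omega)] at hGr0
  have hdvdZ : ((h : ℤ) + w) ∣ (h : ℤ) * r := by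
    refine ⟨(((Sset lam).filter (fun x => x < r)).card : ℤ), ?_⟩
    linarith
  have hdvd : (h + w) ∣ h * r := by
    have : ((h + w : ℕ) : ℤ) ∣ ((h * r : ℕ) : ℤ) := by push_cast; exact hdvdZ
    exact_mod_cast this
  have hcop' : Nat.Coprime (h + w) h := by
    rw [Nat.add_comm]
    exact Nat.coprime_add_self_left.mpr (Nat.Coprime.symm hcop)
  have hdr : (h + w) ∣ r := hcop'.dvd_of_dvd_mul_left hdvd
  have := Nat.le_of_dvd (by omega) hdr
  omega

end CRTaux

/-- If `gcd(h, w) = 1` and `n = h + w`, then for every upper-triangular diagram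
`λ ∈ Y_{h,w}` the smallest positive `m` with `g^m·λ` upper-triangular is `n`;
in particular every orbit of the `ℤ/nℤ`-action on `Y_{h,w}` has length `n`. -/
theorem coprime_return_time_and_orbit_length (h w : ℕ) (hh : 0 < h) (hw : 0 < w)
    (hcop : Nat.gcd h w = 1) :
    (∀ lam : Ydiag h w, UpperTri lam →
      IsLeast {m : ℕ | 0 < m ∧ UpperTri (gY^[m] lam)} (h + w)) ∧
    (∀ lam : Ydiag h w, Function.minimalPeriod (gY : Ydiag h w → Ydiag h w) lam = h + w) := by
  constructor
  · intro lam hU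
    constructor
    · exact ⟨by omega, by rw [CRTaux.gY_iter_n hh]; exact hU⟩
    · intro m hm
      by_contra hlt
      push_neg at hlt
      exact CRTaux.unique_UT hh hcop lam hU hm.1 hlt hm.2
  · intro lam
    have hper : Function.IsPeriodicPt gY (h + w) lam := CRTaux.gY_iter_n hh lam
    have h1 : Function.minimalPeriod gY lam ∣ (h + w) := hper.minimalPeriod_dvd
    have h2 : (h + w) ∣ Function.minimalPeriod gY lam :=
      CRTaux.period_dvd hh hcop lam _ (Function.iterate_minimalPeriod)
    exact Nat.dvd_antisymm h1 h2
end

section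
/- Let h, w be positive integers with gcd(h, w) = 1 and n = h + w. Then every orbit of the ℤ/nℤ-action generated by g on Y_{h,w} contains exactly one upper-triangular diagram. -/
set_option linter.unusedSectionVars false


section core
variable {n : ℕ}

/-- number of `j < k` whose residue lies in `S`. -/
def zcnt (S : Finset (ZMod n)) (k : ℕ) : ℕ :=
  ((Finset.range k).filter (fun j => ((j : ℕ) : ZMod n) ∈ S)).card

/-- the potential function. -/
def zG (S : Finset (ZMod n)) (k : ℕ) : ℤ :=
  (S.card : ℤ) * k - (n : ℤ) * zcnt S k

lemma zG_zero (S : Finset (ZMod n)) : zG S 0 = 0 := by simp [zG, zcnt]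

lemma zcnt_succ (S : Finset (ZMod n)) (k : ℕ) :
    zcnt S (k + 1) = zcnt S k + if ((k : ZMod n) ∈ S) then 1 else 0 := by
  unfold zcnt
  rw [Finset.range_add_one, Finset.filter_insert]
  split <;> simp [Finset.card_insert_of_notMem, Finset.notMem_range_self]

lemma zG_succ (S : Finset (ZMod n)) (k : ℕ) :
    zG S (k + 1) = zG S k + S.card - if ((k : ZMod n) ∈ S) then (n : ℤ) else 0 := by
  unfold zG
  rw [zcnt_succ]
  split <;> push_cast <;> ring

lemma zG_succ_of_not_mem (S : Finset (ZMod n)) {k : ℕ} (hk : ((k : ZMod n) ∉ S)) :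
    zG S (k + 1) = zG S k + S.card := by
  rw [zG_succ, if_neg hk]; ring

lemma zcnt_n [NeZero n] (S : Finset (ZMod n)) : zcnt S n = S.card := by
  unfold zcnt
  apply Finset.card_bij (fun j _ => ((j : ℕ) : ZMod n))
  · intro a ha; exact (Finset.mem_filter.mp ha).2
  · intro a ha b hb hab
    have ha' : a < n := Finset.mem_range.mp (Finset.mem_filter.mp ha).1
    have hb' : b < n := Finset.mem_range.mp (Finset.mem_filter.mp hb).1
    have := congrArg ZMod.val hab
    rwa [ZMod.val_cast_of_lt ha', ZMod.val_cast_of_lt hb'] at this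
  · intro x hx
    exact ⟨x.val, Finset.mem_filter.mpr ⟨Finset.mem_range.mpr (ZMod.val_lt x),
      by rwa [ZMod.natCast_zmod_val]⟩, ZMod.natCast_zmod_val x⟩

lemma zG_add_n [NeZero n] (S : Finset (ZMod n)) : ∀ k, zG S (k + n) = zG S k := by
  intro k
  induction k with
  | zero =>
    rw [Nat.zero_add, zG_zero, zG, zcnt_n]
    ring
  | succ k ih =>
    have : k + 1 + n = (k + n) + 1 := by omega
    rw [this, zG_succ, ih, zG_succ]
    have : ((k + n : ℕ) : ZMod n) = (k : ZMod n) := by push_cast; simp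
    rw [this]

lemma zG_add_mul_n [NeZero n] (S : Finset (ZMod n)) (k t : ℕ) :
    zG S (k + t * n) = zG S k := by
  induction t with
  | zero => simp
  | succ t ih => rw [show k + (t+1) * n = (k + t * n) + n by ring, zG_add_n, ih]

lemma zG_congr [NeZero n] (S : Finset (ZMod n)) {k l : ℕ} (hkl : k % n = l % n) :
    zG S k = zG S l := by
  conv_lhs => rw [show k = k % n + (k / n) * n by rw [Nat.mod_add_div']]
  conv_rhs => rw [show l = l % n + (l / n) * n by rw [Nat.mod_add_div']]
  rw [zG_add_mul_n, zG_add_mul_n, hkl]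

lemma zG_dvd (S : Finset (ZMod n)) (k : ℕ) :
    (n : ℤ) ∣ zG S k - S.card * k := by
  refine ⟨-(zcnt S k), ?_⟩
  simp only [zG]
  ring
variable [NeZero n]

def zcond (S : Finset (ZMod n)) : Prop := ∀ x ∈ S, zG S x.val ≤ 0

lemma mem_shift_iff (S : Finset (ZMod n)) (m x : ZMod n) :
    x ∈ S.image (· + m) ↔ x - m ∈ S := by
  constructor
  · rintro hx
    obtain ⟨y, hy, e⟩ := Finset.mem_image.mp hx
    rwa [← e, add_sub_cancel_right]
  · intro hx
    exact Finset.mem_image.mpr ⟨x - m, hx, sub_add_cancel x m⟩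

lemma card_shift (S : Finset (ZMod n)) (m : ZMod n) :
    (S.image (· + m)).card = S.card :=
  Finset.card_image_of_injective _ (add_left_injective m)

lemma zG_shift (S : Finset (ZMod n)) (m : ZMod n) (m' : ℕ)
    (hm' : ((m' : ℕ) : ZMod n) = -m) :
    ∀ k : ℕ, zG (S.image (· + m)) k = zG S (k + m') - zG S m' := by
  intro k
  induction k with
  | zero => simp [zG_zero]
  | succ k ih =>
    rw [zG_succ, ih, card_shift,
        show k + 1 + m' = (k + m') + 1 by omega, zG_succ]
    have hmem : ((k : ZMod n) ∈ S.image (· + m)) ↔ (((k + m' : ℕ) : ZMod n) ∈ S) := by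
      rw [mem_shift_iff]
      have : ((k + m' : ℕ) : ZMod n) = (k : ZMod n) - m := by push_cast [hm']; ring
      rw [this]
    simp only [hmem]
    ring

lemma zG_val_eq (S : Finset (ZMod n)) (K : ℕ) :
    zG S K = zG S ((K : ZMod n)).val := by
  apply zG_congr
  rw [ZMod.val_natCast]
  exact (Nat.mod_mod_of_dvd K dvd_rfl).symm


theorem core_exists_unique (S : Finset (ZMod n)) (h0 : 0 < S.card)
    (hcop : Nat.Coprime S.card n) :
    ∃! m : ZMod n, zcond (S.image (· + m)) := by
  have hne : S.Nonempty := Finset.card_pos.mp h0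
  obtain ⟨xs, hxsS, hxsmax⟩ := S.exists_max_image (fun x => zG S x.val) hne
  -- bound
  have bound : ∀ K : ℕ, ((K : ZMod n) ∈ S) → zG S K ≤ zG S xs.val := by
    intro K hK
    rw [zG_val_eq S K]
    exact hxsmax _ hK
  -- climb
  have climb : ∀ k : ℕ, zG S xs.val ≤ zG S k →
      ((k : ZMod n) ∈ S ∧ zG S k = zG S xs.val) := by
    intro k hk
    have hex : ∃ d, (((k + d : ℕ) : ZMod n) ∈ S) := by
      refine ⟨(xs - (k : ZMod n)).val, ?_⟩
      have hc : ((k + (xs - (k : ZMod n)).val : ℕ) : ZMod n) = xs := by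
        push_cast [ZMod.natCast_zmod_val]
        ring
      rwa [hc]
    have grow : ∀ d ≤ Nat.find hex, zG S (k + d) = zG S k + S.card * d := by
      intro d hd
      induction d with
      | zero => simp
      | succ d ih =>
        have hdd : d ≤ Nat.find hex := le_trans (Nat.le_succ d) hd
        have hnotmem : ((k + d : ℕ) : ZMod n) ∉ S := Nat.find_min hex (by omega)
        rw [show k + (d + 1) = (k + d) + 1 by omega, zG_succ_of_not_mem S hnotmem,
            ih hdd]
        push_cast
        ring
    have h1 : zG S (k + Nat.find hex) = zG S k + S.card * Nat.find hex := grow _ le_rfl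
    have h2 : zG S (k + Nat.find hex) ≤ zG S xs.val := bound _ (Nat.find_spec hex)
    have h3 : (S.card : ℤ) * (Nat.find hex) ≤ 0 := by omega
    have h4 : Nat.find hex = 0 := by
      by_contra hne0
      have hpos : (0:ℤ) < (S.card : ℤ) * (Nat.find hex) := by
        have : 0 < Nat.find hex := Nat.pos_of_ne_zero hne0
        have : (0:ℤ) < (Nat.find hex : ℤ) := by exact_mod_cast this
        have h0' : (0:ℤ) < (S.card : ℤ) := by exact_mod_cast h0
        positivity
      omega
    have hmem : ((k : ZMod n) ∈ S) := by
      have hsp := Nat.find_spec hex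
      rw [h4, Nat.add_zero] at hsp
      exact hsp
    exact ⟨hmem, le_antisymm (bound k hmem) hk⟩
  -- the answer
  refine ⟨-xs, ?_, ?_⟩
  · intro x hx
    have hval : (((xs).val : ℕ) : ZMod n) = -(-xs) := by
      rw [ZMod.natCast_zmod_val, neg_neg]
    rw [zG_shift S (-xs) xs.val hval]
    have hxm : x - (-xs) ∈ S := (mem_shift_iff S _ x).mp hx
    have hb : zG S (x.val + xs.val) ≤ zG S xs.val := by
      apply bound
      push_cast [ZMod.natCast_zmod_val]
      rwa [sub_neg_eq_add] at hxm
    omega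
  · intro m hm
    set m' : ℕ := (-m).val with hm'def
    have hval : ((m' : ℕ) : ZMod n) = -m := ZMod.natCast_zmod_val _
    have hxT : xs + m ∈ S.image (· + m) :=
      (mem_shift_iff S m _).mpr (by rwa [add_sub_cancel_right])
    have hle := hm _ hxT
    rw [zG_shift S m m' hval] at hle
    have hcast : (((xs + m).val + m' : ℕ) : ZMod n) = xs := by
      push_cast [ZMod.natCast_zmod_val, hm'def]
      ring
    have heq : zG S ((xs + m).val + m') = zG S xs.val := by
      rw [zG_val_eq S _, hcast]
    have hge : zG S xs.val ≤ zG S m' := by omega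
    obtain ⟨hmemm, heqm⟩ := climb m' hge
    have hdvd1 := zG_dvd S m'
    have hdvd2 := zG_dvd S xs.val
    rw [heqm] at hdvd1
    have hdvd : (n : ℤ) ∣ (S.card : ℤ) * ((m' : ℤ) - (xs.val : ℤ)) := by
      have h5 : (S.card : ℤ) * ((m' : ℤ) - (xs.val : ℤ))
          = (zG S xs.val - S.card * xs.val) - (zG S xs.val - S.card * m') := by ring
      rw [h5]
      exact dvd_sub hdvd2 hdvd1
    have hcopZ : IsCoprime (n : ℤ) (S.card : ℤ) := by
      rw [Int.isCoprime_iff_gcd_eq_one, Int.gcd_natCast_natCast]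
      exact hcop.symm
    have hdvd' : (n : ℤ) ∣ ((m' : ℤ) - (xs.val : ℤ)) := hcopZ.dvd_of_dvd_mul_left hdvd
    have hmodeq : (m' : ZMod n) = ((xs.val : ℕ) : ZMod n) := by
      rw [ZMod.natCast_eq_natCast_iff]
      refine (Nat.modEq_iff_dvd).mpr ?_
      rw [show ((xs.val : ℤ) - (m' : ℤ)) = -((m' : ℤ) - (xs.val : ℤ)) by ring]
      exact dvd_neg.mpr hdvd'
    have hfin : -m = xs := by rw [← hval, hmodeq, ZMod.natCast_zmod_val]
    exact neg_eq_iff_eq_neg.mp hfin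
end core

section diagram

set_option linter.unusedSectionVars false

variable {h w : ℕ}

/-- The strictly decreasing "beta-numbers" of a diagram. -/
def bfun (lam : Ydiag h w) : Fin h → ℕ := fun i => lam.1 i + (h - 1 - (i : ℕ))

lemma bfun_strictAnti (lam : Ydiag h w) : StrictAnti (bfun lam) := by
  intro i j hij
  have h1 : lam.1 j ≤ lam.1 i := lam.2.1 (le_of_lt hij)
  have h2 : (i : ℕ) < (j : ℕ) := hij
  have h3 : (j : ℕ) < h := j.2
  unfold bfun
  omega

lemma bfun_lt (lam : Ydiag h w) (i : Fin h) : bfun lam i < h + w := by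
  have h1 : lam.1 i ≤ w := lam.2.2 i
  have h2 : (i : ℕ) < h := i.2
  unfold bfun
  omega

lemma bfun_inj (lam : Ydiag h w) : Function.Injective (bfun lam) :=
  (bfun_strictAnti lam).injective

/-- The set of beta-numbers modulo `n = h + w`. -/
def Bset (lam : Ydiag h w) : Finset (ZMod (h + w)) :=
  Finset.univ.image (fun i => ((bfun lam i : ℕ) : ZMod (h + w)))

lemma Bset_card [NeZero (h + w)] (lam : Ydiag h w) : (Bset lam).card = h := by
  rw [Bset, Finset.card_image_of_injective _ ?_, Finset.card_univ, Fintype.card_fin]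
  intro a b hab
  apply bfun_inj lam
  have := congrArg ZMod.val hab
  rwa [ZMod.val_cast_of_lt (bfun_lt lam a), ZMod.val_cast_of_lt (bfun_lt lam b)] at this

lemma Bset_g (hh : 0 < h) (lam : Ydiag h w) :
    Bset (gY lam) = (Bset lam).image (· + 1) := by
  by_cases hcase : ∀ i, lam.1 i < w
  · have hfun : (fun i => ((bfun (gY lam) i : ℕ) : ZMod (h + w))) =
        (fun i => ((bfun lam i : ℕ) : ZMod (h + w)) + 1) := by
      funext i
      have hb : bfun (gY lam) i = bfun lam i + 1 := by
        have h2 : (i : ℕ) < h := i.2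
        simp only [bfun]; rw [show gY lam = _ from dif_pos hcase]; dsimp only
        omega
      rw [hb]
      push_cast
      ring
    simp only [Bset]
    rw [hfun, Finset.image_image]
    rfl
  · -- first row is full
    have hl0 : lam.1 ⟨0, hh⟩ = w := by
      push_neg at hcase
      obtain ⟨i, hi⟩ := hcase
      have hle : lam.1 i ≤ lam.1 ⟨0, hh⟩ := lam.2.1 (by exact Fin.mk_le_of_le_val (Nat.zero_le _))
      have := lam.2.2 ⟨0, hh⟩
      omega
    set σ : Fin h → Fin h :=
      fun i => if hlt : (i : ℕ) + 1 < h then ⟨(i : ℕ) + 1, hlt⟩ else ⟨0, hh⟩ with hσ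
    have hσsurj : Function.Surjective σ := by
      intro j
      by_cases hj : (j : ℕ) = 0
      · refine ⟨⟨h - 1, by omega⟩, ?_⟩
        have hnot : ¬ (((⟨h - 1, by omega⟩ : Fin h) : ℕ) + 1 < h) := by
          simp only [Fin.val_mk]; omega
        simp only [hσ, dif_neg hnot]
        exact Fin.ext (by simp only [Fin.val_mk]; omega)
      · have hj2 := j.2
        refine ⟨⟨(j : ℕ) - 1, by omega⟩, ?_⟩
        have hpos : (((⟨(j : ℕ) - 1, by omega⟩ : Fin h) : ℕ) + 1 < h) := by
          simp only [Fin.val_mk]; omega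
        simp only [hσ, dif_pos hpos]
        exact Fin.ext (by simp only [Fin.val_mk]; omega)
    have hkey : ∀ i, ((bfun (gY lam) i : ℕ) : ZMod (h + w)) =
        ((bfun lam (σ i) : ℕ) : ZMod (h + w)) + 1 := by
      intro i
      by_cases hlt : (i : ℕ) + 1 < h
      · have hb : bfun (gY lam) i = bfun lam (σ i) + 1 := by
          simp only [bfun]; rw [show gY lam = _ from dif_neg hcase]; simp only [shiftSeq, dif_pos hlt, hσ]
          have h2 : (i : ℕ) < h := i.2
          omega
        rw [hb]
        push_cast
        ring
      · have hival : (i : ℕ) = h - 1 := by have := i.2; omega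
        have hbg : bfun (gY lam) i = 0 := by
          simp only [bfun]; rw [show gY lam = _ from dif_neg hcase]; simp only [shiftSeq, dif_neg hlt]
          omega
        have hbs : bfun lam (σ i) = w + (h - 1) := by
          simp only [bfun, hσ, dif_neg hlt]
          rw [hl0]
          simp
        rw [hbg, hbs]
        have hcast : ((w + (h - 1) : ℕ) : ZMod (h + w)) + 1
            = (((w + (h - 1)) + 1 : ℕ) : ZMod (h + w)) := by push_cast; ring
        rw [hcast, show (w + (h - 1)) + 1 = h + w by omega, ZMod.natCast_self]
        simp
    calc Bset (gY lam)
        = Finset.univ.image (fun i => ((bfun lam (σ i) : ℕ) : ZMod (h + w)) + 1) := by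
          rw [Bset]; exact Finset.image_congr (fun i _ => hkey i)
      _ = (Finset.univ.image σ).image (fun j => ((bfun lam j : ℕ) : ZMod (h + w)) + 1) := by
          rw [Finset.image_image]; rfl
      _ = Finset.univ.image (fun j => ((bfun lam j : ℕ) : ZMod (h + w)) + 1) := by
          rw [Finset.image_univ_of_surjective hσsurj]
      _ = (Bset lam).image (· + 1) := by
          rw [Bset, Finset.image_image]; rfl

lemma Bset_iter (hh : 0 < h) (lam : Ydiag h w) (m : ℕ) :
    Bset (gY^[m] lam) = (Bset lam).image (· + (m : ZMod (h + w))) := by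
  induction m with
  | zero =>
    simp only [Function.iterate_zero, id_eq, Nat.cast_zero, add_zero]
    exact (Finset.image_id).symm
  | succ m ih =>
    rw [Function.iterate_succ_apply', Bset_g hh, ih, Finset.image_image]
    apply Finset.image_congr
    intro x _
    show (x + (m : ZMod (h + w))) + 1 = x + ((m + 1 : ℕ) : ZMod (h + w))
    push_cast
    ring

lemma cnt_Bset [NeZero (h + w)] (lam : Ydiag h w) (i : Fin h) :
    zcnt (Bset lam) (bfun lam i) = h - 1 - (i : ℕ) := by
  have hbij : (Finset.Ioi i).card =
      ((Finset.range (bfun lam i)).filter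
        (fun j => ((j : ℕ) : ZMod (h + w)) ∈ Bset lam)).card := by
    apply Finset.card_bij (fun l _ => bfun lam l)
    · intro l hl
      have hli : i < l := Finset.mem_Ioi.mp hl
      refine Finset.mem_filter.mpr ⟨Finset.mem_range.mpr (bfun_strictAnti lam hli), ?_⟩
      exact Finset.mem_image.mpr ⟨l, Finset.mem_univ l, rfl⟩
    · intro a _ b _ hab
      exact bfun_inj lam hab
    · intro j hj
      obtain ⟨hj1, hj2⟩ := Finset.mem_filter.mp hj
      have hjlt : j < bfun lam i := Finset.mem_range.mp hj1
      obtain ⟨l, _, hl⟩ := Finset.mem_image.mp hj2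
      have hjn : j < h + w := lt_trans hjlt (bfun_lt lam i)
      have hbl : bfun lam l = j := by
        have := congrArg ZMod.val hl
        rwa [ZMod.val_cast_of_lt (bfun_lt lam l), ZMod.val_cast_of_lt hjn] at this
      have hil : i < l := by
        by_contra hc
        push_neg at hc
        rcases eq_or_lt_of_le hc with hc' | hc'
        · rw [hc'] at hbl; omega
        · have := bfun_strictAnti lam hc'
          omega
      exact ⟨l, Finset.mem_Ioi.mpr hil, hbl⟩
  rw [zcnt, ← hbij, Fin.card_Ioi]

lemma upperTri_iff [NeZero (h + w)] (lam : Ydiag h w) :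
    UpperTri lam ↔ zcond (Bset lam) := by
  have key : ∀ i : Fin h,
      (h * lam.1 i ≤ w * (h - 1 - (i : ℕ)) ↔
        zG (Bset lam) ((bfun lam i : ℕ)) ≤ 0) := by
    intro i
    rw [zG, Bset_card, cnt_Bset, sub_nonpos]
    constructor
    · intro hU
      have hn : h * bfun lam i ≤ (h + w) * (h - 1 - (i : ℕ)) := by
        calc h * bfun lam i = h * lam.1 i + h * (h - 1 - (i : ℕ)) := by
              unfold bfun; ring
          _ ≤ w * (h - 1 - (i : ℕ)) + h * (h - 1 - (i : ℕ)) := Nat.add_le_add_right hU _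
          _ = (h + w) * (h - 1 - (i : ℕ)) := by ring
      exact_mod_cast hn
    · intro hZ
      have hn : h * bfun lam i ≤ (h + w) * (h - 1 - (i : ℕ)) := by exact_mod_cast hZ
      have hexp : h * bfun lam i = h * lam.1 i + h * (h - 1 - (i : ℕ)) := by
        unfold bfun; ring
      have hrhs : (h + w) * (h - 1 - (i : ℕ))
          = w * (h - 1 - (i : ℕ)) + h * (h - 1 - (i : ℕ)) := by ring
      rw [hexp, hrhs] at hn
      omega
  constructor
  · intro hU x hx
    obtain ⟨i, _, rfl⟩ := Finset.mem_image.mp hx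
    rw [ZMod.val_cast_of_lt (bfun_lt lam i)]
    exact (key i).mp (hU i)
  · intro hz i
    have hx : ((bfun lam i : ℕ) : ZMod (h + w)) ∈ Bset lam :=
      Finset.mem_image.mpr ⟨i, Finset.mem_univ i, rfl⟩
    have := hz _ hx
    rw [ZMod.val_cast_of_lt (bfun_lt lam i)] at this
    exact (key i).mpr this

lemma Bset_inj (hh : 0 < h) [NeZero (h + w)] {lam mu : Ydiag h w}
    (he : Bset lam = Bset mu) : lam = mu := by
  have e1 : ∀ (nu : Ydiag h w), (Bset nu).image ZMod.val = Finset.univ.image (bfun nu) := by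
    intro nu
    rw [Bset, Finset.image_image]
    apply Finset.image_congr
    intro i _
    exact ZMod.val_cast_of_lt (bfun_lt nu i)
  have him : Finset.univ.image (bfun lam) = Finset.univ.image (bfun mu) := by
    rw [← e1 lam, ← e1 mu, he]
  -- reverse to get strictly monotone enumerations
  have hcard : (Finset.univ.image (bfun lam)).card = h := by
    rw [Finset.card_image_of_injective _ (bfun_inj lam), Finset.card_univ, Fintype.card_fin]
  set rev : Fin h → Fin h := fun i => ⟨h - 1 - (i : ℕ), by have := i.2; omega⟩ with hrev
  have hrevmono : ∀ (nu : Ydiag h w), StrictMono (fun i => bfun nu (rev i)) := by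
    intro nu i j hij
    apply bfun_strictAnti nu
    show (rev j : ℕ) < (rev i : ℕ)
    simp only [hrev]
    have hi2 : (i : ℕ) < h := i.2
    have hj2 : (j : ℕ) < h := j.2
    have : (i : ℕ) < (j : ℕ) := hij
    omega
  have hmemlam : ∀ x, bfun lam (rev x) ∈ Finset.univ.image (bfun lam) := fun x =>
    Finset.mem_image.mpr ⟨rev x, Finset.mem_univ _, rfl⟩
  have hmemmu : ∀ x, bfun mu (rev x) ∈ Finset.univ.image (bfun lam) := fun x => by
    rw [him]; exact Finset.mem_image.mpr ⟨rev x, Finset.mem_univ _, rfl⟩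
  have heq1 := Finset.orderEmbOfFin_unique hcard hmemlam (hrevmono lam)
  have heq2 := Finset.orderEmbOfFin_unique hcard hmemmu (hrevmono mu)
  have heq : (fun i => bfun lam (rev i)) = (fun i => bfun mu (rev i)) := by
    rw [heq1, heq2]
  have hb : bfun lam = bfun mu := by
    funext i
    have hrr : rev (rev i) = i := by
      apply Fin.ext
      simp only [hrev]
      have := i.2
      omega
    have := congrFun heq (rev i)
    simpa [hrr] using this
  apply Subtype.ext
  funext i
  have := congrFun hb i
  unfold bfun at this
  omega

end diagram

/-- If `gcd(h, w) = 1` and `n = h + w`, then every orbit of the `ℤ/nℤ`-action generated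
by `g` on `Y_{h,w}` contains exactly one upper-triangular diagram. -/
theorem coprime_orbit_unique_upper_triangular (h w : ℕ) (hh : 0 < h) (hw : 0 < w)
    (hcop : Nat.gcd h w = 1) (lam : Ydiag h w) :
    ∃! mu : Ydiag h w, (∃ m : ℕ, gY^[m] lam = mu) ∧ UpperTri mu := by
  haveI : NeZero (h + w) := ⟨by omega⟩
  have hcop' : Nat.Coprime h (h + w) := by
    rw [Nat.add_comm]
    exact Nat.coprime_add_self_right.mpr hcop
  obtain ⟨m0, hm0, hm0uniq⟩ := core_exists_unique (Bset lam)
    (by rw [Bset_card]; exact hh) (by rw [Bset_card]; exact hcop')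
  refine ⟨gY^[m0.val] lam, ⟨⟨m0.val, rfl⟩, ?_⟩, ?_⟩
  · rw [upperTri_iff, Bset_iter hh lam m0.val, ZMod.natCast_zmod_val]
    exact hm0
  · rintro mu ⟨⟨m, rfl⟩, hU⟩
    have h1 : zcond (Bset (gY^[m] lam)) := (upperTri_iff _).mp hU
    rw [Bset_iter hh lam m] at h1
    have h2 : ((m : ℕ) : ZMod (h + w)) = m0 := hm0uniq _ h1
    apply Bset_inj hh
    rw [Bset_iter hh lam m, Bset_iter hh lam m0.val, h2, ZMod.natCast_zmod_val]
end

section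
/- Let h, w be positive integers and let λ ∈ Y_{h,w} have width 𝗐(λ) = w. Then each of the sequences λ^{(1)}, …, λ^{(w)} is a well-defined Young diagram in Y_{h,w} (i.e., each defining transpose sequence is weakly decreasing and fits in the box), and there is a strictly decreasing chain of containments λ ⊋ λ^{(1)} ⊋ λ^{(2)} ⊋ ⋯ ⊋ λ^{(w)}, where containment means componentwise inequality of the sequences. -/
/-- The transpose of a sequence of row lengths: `(transposeFun h f) j` is the number of
rows of `f` of length at least `j + 1` (so, `1`-based, `μ_p = #{i : λ_i ≥ p}`). -/
def transposeFun (h : ℕ) (f : Fin h → ℕ) {w : ℕ} : Fin w → ℕ :=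
  fun j => (Finset.univ.filter (fun i : Fin h => (j : ℕ) < f i)).card

/-- The transposed sequence `ν^{(i)} = (μ_1, …, μ_{w−i}, μ_{w−i+2} − 1, …, μ_w − 1, 0)`
defining the diagram `λ^{(i)}`, where `μ = λ^T` (all `0`-indexed here). -/
def nuSeq (h w : ℕ) (f : Fin h → ℕ) (i : ℕ) : Fin w → ℕ :=
  fun p =>
    if (p : ℕ) < w - i then transposeFun h f p
    else if hp : (p : ℕ) < w - 1 then
      transposeFun h f (⟨(p : ℕ) + 1, by omega⟩ : Fin w) - 1
    else 0

/-- The diagram `λ^{(i)} = (ν^{(i)})^T`, as a sequence of `h` row lengths. -/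
def lamStep (h w : ℕ) (f : Fin h → ℕ) (i : ℕ) : Fin h → ℕ :=
  transposeFun w (nuSeq h w f i)

/-!
Transposition of sequences in a box is an involution on Young diagrams and preserves the total
size. Every `ν^{(i+1)}` lies below `ν^{(i)}` pointwise, with `ν^{(0)} = λ^T`, and since `λ` has
full width every column length `μ_p` is positive, so `ν^{(i+1)}` is strictly smaller at position
`w − i − 1`. Transposing back, `λ^{(i+1)} ≤ λ^{(i)}` pointwise while their sizes differ.
-/

open Finset

section Transpose

variable {h w : ℕ}

theorem transposeFun_antitone (f : Fin h → ℕ) : Antitone (transposeFun h f (w := w)) :=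
  fun _ _ hpq => card_le_card <|
    monotone_filter_right _ fun _ _ hp => (Fin.le_def.mp hpq).trans_lt hp

theorem transposeFun_le (f : Fin h → ℕ) (p : Fin w) : transposeFun h f p ≤ h :=
  (card_le_univ _).trans_eq (Fintype.card_fin h)

theorem transposeFun_mono {f g : Fin w → ℕ} (hfg : f ≤ g) :
    transposeFun w f (w := h) ≤ transposeFun w g :=
  fun _ => card_le_card <| monotone_filter_right _ fun p _ hp => hp.trans_le (hfg p)

theorem transposeFun_pos_iff (f : Fin h → ℕ) (p : Fin w) :
    0 < transposeFun h f p ↔ ∃ i, (p : ℕ) < f i := by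
  simp [transposeFun, card_pos, filter_nonempty_iff]

theorem sum_transposeFun (ν : Fin w → ℕ) (hν : ∀ p, ν p ≤ h) :
    ∑ q : Fin h, transposeFun w ν q = ∑ p, ν p := by
  simp_rw [transposeFun, card_filter]
  rw [sum_comm]
  refine sum_congr rfl fun p _ => ?_
  rw [← card_filter, Fin.card_filter_val_lt, min_eq_right (hν p)]

theorem transposeFun_transposeFun {f : Fin h → ℕ} (hf : Antitone f) (hfw : ∀ i, f i ≤ w) :
    transposeFun w (transposeFun h f (w := w)) = f := by
  funext q
  have hμ (p : Fin w) : (q : ℕ) < transposeFun h f p ↔ (p : ℕ) < f q :=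
    Fin.lt_card_filter_univ_iff_apply_of_imp _ fun _ _ hji hi => hi.trans_le (hf hji)
  simp only [transposeFun] at hμ ⊢
  simp_rw [hμ]
  rw [Fin.card_filter_val_lt, min_eq_right (hfw q)]

end Transpose

section NuSeq

variable {h w : ℕ} (f : Fin h → ℕ)

theorem nuSeq_zero : nuSeq h w f 0 = transposeFun h f := by
  funext p
  simp [nuSeq]

theorem nuSeq_le (i : ℕ) (p : Fin w) : nuSeq h w f i p ≤ h := by
  unfold nuSeq
  split_ifs
  · exact transposeFun_le f p
  · exact (Nat.sub_le _ _).trans (transposeFun_le f _)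
  · exact Nat.zero_le h

theorem nuSeq_antitone (i : ℕ) : Antitone (nuSeq h w f i) := by
  intro p q hpq
  have hμ := transposeFun_antitone f (w := w)
  rw [Fin.le_def] at hpq
  unfold nuSeq
  split_ifs
  · exact hμ (Fin.le_def.mpr hpq)
  · omega
  · omega
  · exact (Nat.sub_le _ _).trans (hμ (Fin.le_def.mpr (by simp; omega)))
  · exact Nat.sub_le_sub_right (hμ (Fin.le_def.mpr (by simp; omega))) 1
  · omega
  all_goals exact Nat.zero_le _

theorem nuSeq_succ_le (i : ℕ) : nuSeq h w f (i + 1) ≤ nuSeq h w f i := by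
  intro p
  unfold nuSeq
  split_ifs
  · exact le_rfl
  · omega
  · omega
  · exact (Nat.sub_le _ _).trans (transposeFun_antitone f (Fin.le_def.mpr (by simp)))
  · exact le_rfl
  all_goals exact Nat.zero_le _

theorem nuSeq_succ_lt (hμ : ∀ p : Fin w, 0 < transposeFun h f p) {i : ℕ} (hi : i < w) :
    nuSeq h w f (i + 1) ⟨w - i - 1, by omega⟩ < nuSeq h w f i ⟨w - i - 1, by omega⟩ := by
  have hlt : w - i - 1 < w - i := by omega
  have hnlt : ¬ w - i - 1 < w - (i + 1) := by omega
  simp only [nuSeq, if_pos hlt, if_neg hnlt]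
  split_ifs
  · have hstep := transposeFun_antitone f (Fin.le_def.mpr (Nat.le_succ (w - i - 1)) :
      (⟨w - i - 1, by omega⟩ : Fin w) ≤ ⟨w - i - 1 + 1, by omega⟩)
    have hpos := hμ ⟨w - i - 1, by omega⟩
    omega
  · exact hμ _

theorem sum_nuSeq_succ_lt (hμ : ∀ p : Fin w, 0 < transposeFun h f p) {i : ℕ} (hi : i < w) :
    ∑ p, nuSeq h w f (i + 1) p < ∑ p, nuSeq h w f i p :=
  sum_lt_sum (fun p _ => nuSeq_succ_le f i p) ⟨_, mem_univ _, nuSeq_succ_lt f hμ hi⟩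

end NuSeq

section LamStep

variable {h w : ℕ}

theorem lamStep_zero (lam : Ydiag h w) : lamStep h w lam.1 0 = lam.1 := by
  rw [lamStep, nuSeq_zero, transposeFun_transposeFun lam.2.1 lam.2.2]

theorem lamStep_succ_le (f : Fin h → ℕ) (i : ℕ) : lamStep h w f (i + 1) ≤ lamStep h w f i :=
  transposeFun_mono (nuSeq_succ_le f i)

theorem sum_lamStep (f : Fin h → ℕ) (i : ℕ) :
    ∑ q, lamStep h w f i q = ∑ p, nuSeq h w f i p :=
  sum_transposeFun _ (nuSeq_le f i)

theorem lamStep_succ_ne {f : Fin h → ℕ} (hμ : ∀ p : Fin w, 0 < transposeFun h f p) {i : ℕ}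
    (hi : i < w) : lamStep h w f (i + 1) ≠ lamStep h w f i := by
  intro heq
  have := sum_nuSeq_succ_lt f hμ hi
  rw [← sum_lamStep, ← sum_lamStep, heq] at this
  exact this.false

end LamStep

/-- For `λ ∈ Y_{h,w}` of full width `𝗐(λ) = w`, each sequence `ν^{(i)}` (`1 ≤ i ≤ w`)
is weakly decreasing with entries at most `h` (so each `λ^{(i)} = (ν^{(i)})^T` is a
well-defined diagram in `Y_{h,w}`), and there is a strictly decreasing chain of
containments `λ ⊋ λ^{(1)} ⊋ λ^{(2)} ⊋ ⋯ ⊋ λ^{(w)}` (containment being componentwise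
inequality of the row sequences). -/
theorem lamStep_well_defined_and_strict_chain (h w : ℕ) (hh : 0 < h) (hw : 0 < w)
    (lam : Ydiag h w) (hwidth : lam.1 ⟨0, hh⟩ = w) :
    (∀ i : ℕ, 1 ≤ i → i ≤ w →
      Antitone (nuSeq h w lam.1 i) ∧ ∀ p : Fin w, nuSeq h w lam.1 i p ≤ h) ∧
    ((∀ q : Fin h, lamStep h w lam.1 1 q ≤ lam.1 q) ∧ lamStep h w lam.1 1 ≠ lam.1) ∧
    (∀ i : ℕ, 1 ≤ i → i < w →
      (∀ q : Fin h, lamStep h w lam.1 (i + 1) q ≤ lamStep h w lam.1 i q) ∧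
        lamStep h w lam.1 (i + 1) ≠ lamStep h w lam.1 i) := by
  have hμ (p : Fin w) : 0 < transposeFun h lam.1 p :=
    (transposeFun_pos_iff _ p).2 ⟨⟨0, hh⟩, hwidth.symm ▸ p.isLt⟩
  have hfirst := lamStep_succ_le lam.1 0 (w := w)
  have hfirst_ne := lamStep_succ_ne hμ hw
  rw [lamStep_zero] at hfirst hfirst_ne
  exact ⟨fun i _ _ => ⟨nuSeq_antitone _ i, nuSeq_le _ i⟩, ⟨hfirst, hfirst_ne⟩,
    fun i _ hi => ⟨lamStep_succ_le _ i, lamStep_succ_ne hμ hi⟩⟩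
end

section
/- Let t be a positive integer, h = 2, w = 2t, and n = h + w = 2t + 2. Then the orbit of the diagram (t, 0) ∈ Y_{2,2t} under the ℤ/nℤ-action generated by g has length t + 1 = n/2; that is, the smallest positive integer m with g^m·(t,0) = (t,0) is t + 1. -/
/-- The diagram `(t, 0) ∈ Y_{2,w}` (for `t ≤ w`). -/
def twoRowDiag (w t : ℕ) (ht : t ≤ w) : Ydiag 2 w :=
  ⟨fun i => if (i : ℕ) = 0 then t else 0, by
    intro i j hij
    dsimp only
    by_cases hj : (j : ℕ) = 0
    · have hi : (i : ℕ) = 0 := by have := Fin.le_def.mp hij; omega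
      simp [hi, hj]
    · simp [hj], by
    intro i
    dsimp only
    by_cases hi : (i : ℕ) = 0 <;> simp [hi, ht]⟩


def pd (t k : ℕ) (hk : k ≤ t) : Ydiag 2 (2 * t) :=
  ⟨fun i => if (i : ℕ) = 0 then t + k else k, by
    intro i j hij
    dsimp only
    by_cases hj : (j : ℕ) = 0
    · have hi : (i : ℕ) = 0 := by have := Fin.le_def.mp hij; omega
      simp [hi, hj]
    · simp only [hj, if_false]
      split <;> omega, by
    intro i
    dsimp only
    split <;> omega⟩

lemma pd_zero (t : ℕ) : pd t 0 (Nat.zero_le t) = twoRowDiag (2 * t) t (Nat.le_mul_of_pos_left t two_pos) := by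
  apply Subtype.ext
  funext i
  simp [pd, twoRowDiag]

lemma gY_pd_lt (t k : ℕ) (hk : k < t) :
    gY (pd t k hk.le) = pd t (k + 1) hk := by
  have hall : ∀ i, (pd t k hk.le).1 i < 2 * t := by
    intro i
    simp only [pd]
    split <;> omega
  unfold gY
  refine (dif_pos hall).trans ?_
  apply Subtype.ext
  funext i
  simp only [pd]
  split <;> omega

lemma gY_pd_top (t : ℕ) (ht : 0 < t) :
    gY (pd t t le_rfl) = twoRowDiag (2 * t) t (Nat.le_mul_of_pos_left t two_pos) := by
  have hnall : ¬ ∀ i, (pd t t le_rfl).1 i < 2 * t := by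
    intro hall
    have := hall 0
    simp [pd] at this
    omega
  unfold gY
  refine (dif_neg hnall).trans ?_
  apply Subtype.ext
  funext i
  simp only [shiftSeq, twoRowDiag, pd]
  by_cases hi : (i : ℕ) = 0
  · have : (i : ℕ) + 1 < 2 := by omega
    simp [hi, this]
  · have h1 : (i : ℕ) = 1 := by omega
    have : ¬ ((i : ℕ) + 1 < 2) := by omega
    simp [hi, this]

lemma gY_iter (t : ℕ) (ht : 0 < t) : ∀ k (hk : k ≤ t),
    gY^[k] (twoRowDiag (2 * t) t (Nat.le_mul_of_pos_left t two_pos)) = pd t k hk := by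
  intro k
  induction k with
  | zero => intro hk; simp [pd_zero]
  | succ m ih =>
    intro hk
    rw [Function.iterate_succ_apply', ih (by omega), gY_pd_lt t m (by omega)]

/-- For `h = 2`, `w = 2t`, `n = 2t + 2`: the orbit of `(t, 0) ∈ Y_{2,2t}` under the
`ℤ/nℤ`-action generated by `g` has length `t + 1 = n/2`; i.e. `t + 1` is the smallest
positive `m` with `g^m·(t, 0) = (t, 0)`. -/
theorem orbit_length_of_half_width_diagram (t : ℕ) (ht : 0 < t) :
    IsLeast {m : ℕ | 0 < m ∧
        gY^[m] (twoRowDiag (2 * t) t (by omega)) = twoRowDiag (2 * t) t (by omega)}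
      (t + 1) := by
  constructor
  · refine ⟨by omega, ?_⟩
    have : (t + 1 : ℕ) = t + 1 := rfl
    rw [show t + 1 = t + 1 from rfl, Function.iterate_succ_apply',
      gY_iter t ht t le_rfl, gY_pd_top t ht]
  · intro m ⟨hm, heq⟩
    by_contra hlt
    push_neg at hlt
    have hmt : m ≤ t := by omega
    rw [gY_iter t ht m hmt] at heq
    have := congrFun (congrArg Subtype.val heq) ⟨1, by omega⟩
    simp [pd, twoRowDiag] at this
    omega
end
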